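/- For all P, Q ∈ pCSP, if P ⊑_FS Q then P ⊑_pmust Q. -/

import Mathlib

open Classical

noncomputable section

namespace PaperPCSP

/-! ### Finitely supported distributions as weight functions -/

/-- Weight functions on `X`; probability distributions are those satisfying `IsDist`. -/
abbrev Wt (X : Type) := X → ℝ

/-- The support of a weight function. -/
def dsupp {X : Type} (Δ : Wt X) : Set X := Function.support Δ

/-- `Δ` is a finitely supported probability distribution. -/
def IsDist {X : Type} (Δ : Wt X) : Prop :=
  (∀ x, 0 ≤ Δ x) ∧ (dsupp Δ).Finite ∧ ∑ᶠ x, Δ x = 1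

/-- The point distribution at `x`. -/
def dirac {X : Type} (x : X) : Wt X := fun y => if y = x then 1 else 0

/-- Pushforward of a weight function along a map. -/
def dmap {X Y : Type} (g : X → Y) (Δ : Wt X) : Wt Y :=
  fun y => ∑ᶠ x ∈ {x | g x = y}, Δ x

/-- Expected value of `f` under `Δ`. -/
def dexp {X : Type} (Δ : Wt X) (f : X → ℝ) : ℝ := ∑ᶠ x, Δ x * f x

/-! ### Syntax of pCSP -/

mutual
/-- Process terms of pCSP (over prefix alphabet `A`). -/
inductive PCSP (A : Type) : Type where
  | st : SCSP A → PCSP A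
  | pch : ℝ → PCSP A → PCSP A → PCSP A
/-- State-based process terms of pCSP. -/
inductive SCSP (A : Type) : Type where
  | nil : SCSP A
  | pre : A → PCSP A → SCSP A
  | ich : PCSP A → PCSP A → SCSP A
  | ech : SCSP A → SCSP A → SCSP A
  | par : Set A → SCSP A → SCSP A → SCSP A
end

mutual
/-- Well-formedness: all probabilistic choices have `p ∈ (0,1)`.  `pCSP` proper
consists of the well-formed terms. -/
inductive PWF : {A : Type} → PCSP A → Prop where
  | st {A} {s : SCSP A} : SWF s → PWF (.st s)
  | pch {A} {p : ℝ} {P Q : PCSP A} : 0 < p → p < 1 → PWF P → PWF Q → PWF (.pch p P Q)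
inductive SWF : {A : Type} → SCSP A → Prop where
  | nil {A} : SWF (SCSP.nil (A := A))
  | pre {A} {a : A} {P} : PWF P → SWF (.pre a P)
  | ich {A} {P Q : PCSP A} : PWF P → PWF Q → SWF (.ich P Q)
  | ech {A} {s t : SCSP A} : SWF s → SWF t → SWF (.ech s t)
  | par {A} {B : Set A} {s t : SCSP A} : SWF s → SWF t → SWF (.par B s t)
end

/-- Interpretation of process terms as distributions over state-based terms. -/
def PCSP.interp {A : Type} : PCSP A → Wt (SCSP A)
  | .st s => dirac s
  | .pch p P Q => fun t => p * P.interp t + (1 - p) * Q.interp t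

/-! ### Operational semantics -/

/-- The probabilistic labelled transition relation; `none` is the internal action τ. -/
inductive Step {A : Type} : SCSP A → Option A → Wt (SCSP A) → Prop where
  | pre (a : A) (P : PCSP A) : Step (.pre a P) (some a) P.interp
  | ichL (P Q : PCSP A) : Step (.ich P Q) none P.interp
  | ichR (P Q : PCSP A) : Step (.ich P Q) none Q.interp
  | echL {s₁ s₂ : SCSP A} {a : A} {Δ} :
      Step s₁ (some a) Δ → Step (.ech s₁ s₂) (some a) Δ
  | echR {s₁ s₂ : SCSP A} {a : A} {Δ} :
      Step s₂ (some a) Δ → Step (.ech s₁ s₂) (some a) Δ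
  | echTL {s₁ s₂ : SCSP A} {Δ} :
      Step s₁ none Δ → Step (.ech s₁ s₂) none (dmap (fun t => .ech t s₂) Δ)
  | echTR {s₁ s₂ : SCSP A} {Δ} :
      Step s₂ none Δ → Step (.ech s₁ s₂) none (dmap (fun t => .ech s₁ t) Δ)
  | parL {B : Set A} {s₁ s₂ : SCSP A} {α : Option A} {Δ} :
      Step s₁ α Δ → (∀ a, α = some a → a ∉ B) →
      Step (.par B s₁ s₂) α (dmap (fun t => .par B t s₂) Δ)
  | parR {B : Set A} {s₁ s₂ : SCSP A} {α : Option A} {Δ} :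
      Step s₂ α Δ → (∀ a, α = some a → a ∉ B) →
      Step (.par B s₁ s₂) α (dmap (fun t => .par B s₁ t) Δ)
  | parS {B : Set A} {s₁ s₂ : SCSP A} {a : A} {Δ₁ Δ₂} :
      a ∈ B → Step s₁ (some a) Δ₁ → Step s₂ (some a) Δ₂ →
      Step (.par B s₁ s₂) none
        (dmap (fun q : SCSP A × SCSP A => .par B q.1 q.2) (fun q => Δ₁ q.1 * Δ₂ q.2))

/-! ### Lifting relations to distributions, weak transitions -/

/-- Lifting of a state-vs-distribution relation to distributions. -/
def Lift {A : Type} (R : SCSP A → Wt (SCSP A) → Prop) (Δ Θ : Wt (SCSP A)) : Prop :=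
  ∃ (n : ℕ) (p : Fin n → ℝ) (s : Fin n → SCSP A) (Φ : Fin n → Wt (SCSP A)),
    (∀ i, 0 ≤ p i) ∧ (∑ i, p i = 1) ∧
    (Δ = fun t => ∑ i, p i * dirac (s i) t) ∧
    (∀ i, R (s i) (Φ i)) ∧
    (Θ = fun t => ∑ i, p i * Φ i t)

/-- The transition relation lifted to distributions. -/
def StepD {A : Type} (α : Option A) : Wt (SCSP A) → Wt (SCSP A) → Prop :=
  Lift (fun s Δ => Step s α Δ)

/-- `s --τ̂--> Δ` : a τ-step or staying put. -/
def stepTauHat {A : Type} (s : SCSP A) (Δ : Wt (SCSP A)) : Prop :=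
  Step s none Δ ∨ Δ = dirac s

/-- `==τ̂==>` : reflexive-transitive closure of the lifted `--τ̂-->`. -/
def TauStar {A : Type} : Wt (SCSP A) → Wt (SCSP A) → Prop :=
  Relation.ReflTransGen (Lift stepTauHat)

/-- `Δ ==â==> Θ` for a visible action `a`. -/
def WeakA {A : Type} (a : A) (Δ Θ : Wt (SCSP A)) : Prop :=
  ∃ Δ₁ Δ₂, TauStar Δ Δ₁ ∧ StepD (some a) Δ₁ Δ₂ ∧ TauStar Δ₂ Θ

/-- `Δ ==α̂==> Θ`, which is `==τ̂==>` when `α = τ`. -/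
def Weak {A : Type} : Option A → Wt (SCSP A) → Wt (SCSP A) → Prop
  | none => TauStar
  | some a => WeakA a

/-- `s ↛X` : the state `s` enables no action from `X ∪ {τ}`. -/
def SRefuses {A : Type} (s : SCSP A) (X : Set A) : Prop :=
  (∀ Δ, ¬ Step s none Δ) ∧ ∀ a ∈ X, ∀ Δ, ¬ Step s (some a) Δ

/-- `Δ ↛X` : every state in the support of `Δ` refuses `X`. -/
def DRefuses {A : Type} (Δ : Wt (SCSP A)) (X : Set A) : Prop :=
  ∀ s ∈ dsupp Δ, SRefuses s X

/-! ### Simulation and failure simulation -/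

/-- `R` is a simulation. -/
def IsSimulation {A : Type} (R : SCSP A → Wt (SCSP A) → Prop) : Prop :=
  ∀ s Θ α Δ, R s Θ → Step s α Δ → ∃ Θ', Weak α Θ Θ' ∧ Lift R Δ Θ'

/-- `R` is a failure simulation. -/
def IsFailureSim {A : Type} (R : SCSP A → Wt (SCSP A) → Prop) : Prop :=
  IsSimulation R ∧
  ∀ s Θ (X : Set A), R s Θ → SRefuses s X → ∃ Θ', TauStar Θ Θ' ∧ DRefuses Θ' X

/-- `s ⊲_S Θ`. -/
def simLE {A : Type} (s : SCSP A) (Θ : Wt (SCSP A)) : Prop :=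
  ∃ R, IsSimulation R ∧ R s Θ

/-- `s ⊲_FS Θ`. -/
def fsimLE {A : Type} (s : SCSP A) (Θ : Wt (SCSP A)) : Prop :=
  ∃ R, IsFailureSim R ∧ R s Θ

/-- The simulation preorder `P ⊑_S Q`. -/
def SimPre {A : Type} (P Q : PCSP A) : Prop :=
  ∃ Θ, TauStar Q.interp Θ ∧ Lift simLE P.interp Θ

/-- The failure simulation preorder `P ⊑_FS Q`. -/
def FSimPre {A : Type} (P Q : PCSP A) : Prop :=
  ∃ Θ, TauStar P.interp Θ ∧ Lift fsimLE Q.interp Θ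
/-! ### Syntactic operations: renaming, and ◻ / ∥ distributed over probabilistic choice -/

mutual
/-- Renaming of actions in a process term. -/
def mapP {A B : Type} (f : A → B) : PCSP A → PCSP B
  | .st s => .st (mapS f s)
  | .pch p P Q => .pch p (mapP f P) (mapP f Q)
def mapS {A B : Type} (f : A → B) : SCSP A → SCSP B
  | .nil => .nil
  | .pre a P => .pre (f a) (mapP f P)
  | .ich P Q => .ich (mapP f P) (mapP f Q)
  | .ech s t => .ech (mapS f s) (mapS f t)
  | .par X s t => .par (f '' X) (mapS f s) (mapS f t)
end

/-- `s ∥_B Q` for a state `s`, distributing over probabilistic choice. -/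
def parCS {A : Type} (B : Set A) (s : SCSP A) : PCSP A → PCSP A
  | .st t => .st (.par B s t)
  | .pch p Q₁ Q₂ => .pch p (parCS B s Q₁) (parCS B s Q₂)

/-- `P ∥_B Q` on processes, distributing over probabilistic choice. -/
def parC {A : Type} (B : Set A) : PCSP A → PCSP A → PCSP A
  | .st s, Q => parCS B s Q
  | .pch p P₁ P₂, Q => .pch p (parC B P₁ Q) (parC B P₂ Q)

/-- `s ◻ Q` for a state `s`, distributing over probabilistic choice. -/
def echCS {A : Type} (s : SCSP A) : PCSP A → PCSP A
  | .st t => .st (.ech s t)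
  | .pch p Q₁ Q₂ => .pch p (echCS s Q₁) (echCS s Q₂)

/-- `P ◻ Q` on processes, distributing over probabilistic choice. -/
def echC {A : Type} : PCSP A → PCSP A → PCSP A
  | .st s, Q => echCS s Q
  | .pch p P₁ P₂, Q => .pch p (echC P₁ Q) (echC P₂ Q)

/-- Finite (nonempty) indexed internal choice `⨅_{i} P i`. -/
def ichFin {A : Type} : (n : ℕ) → (Fin (n+1) → PCSP A) → PCSP A
  | 0, P => P 0
  | n+1, P => .st (.ich (P 0) (ichFin n (fun i => P i.succ)))

/-- Finite (nonempty) indexed probabilistic choice `⊕_{i} p i · P i`. -/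
def pchFin {A : Type} : (n : ℕ) → (Fin (n+1) → ℝ) → (Fin (n+1) → PCSP A) → PCSP A
  | 0, _, P => P 0
  | n+1, p, P => .pch (p 0) (P 0)
      (pchFin n (fun i => p i.succ / (1 - p 0)) (fun i => P i.succ))

/-- Finite (nonempty) indexed external choice of states `◻_{i} s i`. -/
def echFin {A : Type} : (n : ℕ) → (Fin (n+1) → SCSP A) → SCSP A
  | 0, s => s 0
  | n+1, s => .ech (s 0) (echFin n (fun i => s i.succ))

/-- External choice of a list of states (empty list gives `0`). -/
def echList {A : Type} : List (SCSP A) → SCSP A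
  | [] => .nil
  | s :: l => .ech s (echList l)

/-! ### State-based scalar testing -/

/-- The alphabet `Act ∪ {ω}` for ordinary (scalar) tests. -/
abbrev TAct (A : Type) := Sum A Unit

/-- The success action ω. -/
def omA {A : Type} : TAct A := Sum.inr ()

/-- Membership in the state-based results-gathering function `V` (with success action `w`). -/
inductive VMem {B : Type} (w : B) : SCSP B → ℝ → Prop where
  | succ {s : SCSP B} {Δ} : Step s (some w) Δ → VMem w s 1
  | step {s : SCSP B} {α : Option B} {Δ} (f : SCSP B → ℝ) :
      (∀ Θ, ¬ Step s (some w) Θ) → Step s α Δ →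
      (∀ t ∈ dsupp Δ, VMem w t (f t)) → VMem w s (dexp Δ f)
  | stuck {s : SCSP B} : (∀ α Δ, ¬ Step s α Δ) → VMem w s 0

/-- `V(Δ)` : the set of outcomes of a distribution, via choice functions. -/
def VD {B : Type} (w : B) (Δ : Wt (SCSP B)) : Set ℝ :=
  {r | ∃ f : SCSP B → ℝ, (∀ t ∈ dsupp Δ, VMem w t (f t)) ∧ r = dexp Δ f}

/-- The application `T ∥_Act P` of a test to a process. -/
def applyTest {A : Type} (T : PCSP (TAct A)) (P : PCSP A) : PCSP (TAct A) :=
  parC (Set.range Sum.inl) T (mapP Sum.inl P)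

/-- `A(T,P)` : state-based testing outcomes. -/
def Aset {A : Type} (T : PCSP (TAct A)) (P : PCSP A) : Set ℝ :=
  VD omA (applyTest T P).interp

/-- The Hoare preorder on sets of reals. -/
def HoareLE (X Y : Set ℝ) : Prop := ∀ x ∈ X, ∃ y ∈ Y, x ≤ y

/-- The Smyth preorder on sets of reals. -/
def SmythLE (X Y : Set ℝ) : Prop := ∀ y ∈ Y, ∃ x ∈ X, x ≤ y

/-- The may-testing preorder `⊑_pmay`. -/
def PMay {A : Type} (P Q : PCSP A) : Prop :=
  ∀ T : PCSP (TAct A), PWF T → HoareLE (Aset T P) (Aset T Q)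

/-- The must-testing preorder `⊑_pmust`. -/
def PMust {A : Type} (P Q : PCSP A) : Prop :=
  ∀ T : PCSP (TAct A), PWF T → SmythLE (Aset T P) (Aset T Q)

/-! ### Action-based scalar testing -/

/-- Membership in the action-based results-gathering function `V̄`. -/
inductive VBarMem {B : Type} (w : B) : SCSP B → ℝ → Prop where
  | succ {s : SCSP B} {Δ} : Step s (some w) Δ → VBarMem w s 1
  | step {s : SCSP B} {α : Option B} {Δ} (f : SCSP B → ℝ) :
      α ≠ some w → Step s α Δ →
      (∀ t ∈ dsupp Δ, VBarMem w t (f t)) → VBarMem w s (dexp Δ f)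
  | stuck {s : SCSP B} : (∀ α Δ, ¬ Step s α Δ) → VBarMem w s 0

/-- `V̄(Δ)`. -/
def VBarD {B : Type} (w : B) (Δ : Wt (SCSP B)) : Set ℝ :=
  {r | ∃ f : SCSP B → ℝ, (∀ t ∈ dsupp Δ, VBarMem w t (f t)) ∧ r = dexp Δ f}

/-- `Ā(T,P)` : action-based testing outcomes. -/
def AsetBar {A : Type} (T : PCSP (TAct A)) (P : PCSP A) : Set ℝ :=
  VBarD omA (applyTest T P).interp

/-- The action-based may-testing preorder `⊑̄_pmay`. -/
def PMayBar {A : Type} (P Q : PCSP A) : Prop :=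
  ∀ T : PCSP (TAct A), PWF T → HoareLE (AsetBar T P) (AsetBar T Q)

/-- The action-based must-testing preorder `⊑̄_pmust`. -/
def PMustBar {A : Type} (P Q : PCSP A) : Prop :=
  ∀ T : PCSP (TAct A), PWF T → SmythLE (AsetBar T P) (AsetBar T Q)
/-! ### ω-avoiding transitions and the relation ⊲ᵉ_FS -/

/-- `s --α-->_ω Δ` : a transition from a state not enabling the success action `w`. -/
def StepOmega {B : Type} (w : B) (s : SCSP B) (α : Option B) (Δ : Wt (SCSP B)) : Prop :=
  (∀ Θ, ¬ Step s (some w) Θ) ∧ Step s α Δ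

/-- `s --τ̂-->_ω Δ`. -/
def stepTauHatOm {B : Type} (w : B) (s : SCSP B) (Δ : Wt (SCSP B)) : Prop :=
  StepOmega w s none Δ ∨ Δ = dirac s

/-- `==τ̂==>_ω`. -/
def TauStarOm {B : Type} (w : B) : Wt (SCSP B) → Wt (SCSP B) → Prop :=
  Relation.ReflTransGen (Lift (stepTauHatOm w))

/-- `==â==>_ω` for a visible action `a`. -/
def WeakAOm {B : Type} (w : B) (a : B) (Δ Θ : Wt (SCSP B)) : Prop :=
  ∃ Δ₁ Δ₂, TauStarOm w Δ Δ₁ ∧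
    Lift (fun s Φ => StepOmega w s (some a) Φ) Δ₁ Δ₂ ∧ TauStarOm w Δ₂ Θ

/-- `==α̂==>_ω`. -/
def WeakOm {B : Type} (w : B) : Option B → Wt (SCSP B) → Wt (SCSP B) → Prop
  | none => TauStarOm w
  | some a => WeakAOm w a

/-- A postfixed point for the coinductive definition of `⊲ᵉ_FS`. -/
def IsEFailSim {B : Type} (w : B) (R : SCSP B → Wt (SCSP B) → Prop) : Prop :=
  (∀ s Θ α Δ, R s Θ → StepOmega w s α Δ → ∃ Θ', WeakOm w α Θ Θ' ∧ Lift R Δ Θ') ∧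
  (∀ s Θ (X : Set B), R s Θ → w ∈ X → SRefuses s X →
    ∃ Θ', TauStarOm w Θ Θ' ∧ DRefuses Θ' X)

/-- `s ⊲ᵉ_FS Θ` : the largest relation satisfying the transfer properties. -/
def efsimLE {B : Type} (w : B) (s : SCSP B) (Θ : Wt (SCSP B)) : Prop :=
  ∃ R, IsEFailSim w R ∧ R s Θ

/-! ### Vector-based testing with success actions from Ω -/

/-- `α!o` : update the `α`-component of the outcome tuple to 1 if `α` is a success action. -/
def bang {A Om : Type} (α : Option (Sum A Om)) (o : Om → ℝ) : Om → ℝ :=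
  fun w => if α = some (Sum.inr w) then 1 else o w

mutual
/-- Membership in the vector-based convex-closed results-gathering function `V̄↕^Ω`
for states.  -/
inductive WMem : {A Om : Type} → SCSP (Sum A Om) → (Om → ℝ) → Prop where
  | stuck {A Om : Type} {s : SCSP (Sum A Om)} :
      (∀ α Δ, ¬ Step s α Δ) → WMem s (fun _ => 0)
  | step {A Om : Type} {s : SCSP (Sum A Om)} {n : ℕ}
      (p : Fin (n+1) → ℝ) (α : Fin (n+1) → Option (Sum A Om))
      (Δ : Fin (n+1) → Wt (SCSP (Sum A Om))) (o : Fin (n+1) → Om → ℝ) :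
      (∀ i, 0 ≤ p i) → (∑ i, p i = 1) →
      (∀ i, Step s (α i) (Δ i)) →
      (∀ i, WMemD (Δ i) (o i)) →
      WMem s (fun w => ∑ i, p i * bang (α i) (o i) w)
/-- Membership in `V̄↕^Ω` for distributions. -/
inductive WMemD : {A Om : Type} → Wt (SCSP (Sum A Om)) → (Om → ℝ) → Prop where
  | mk {A Om : Type} {Δ : Wt (SCSP (Sum A Om))} (f : SCSP (Sum A Om) → Om → ℝ) :
      (∀ t ∈ dsupp Δ, WMem t (f t)) → WMemD Δ (fun w => ∑ᶠ t, Δ t * f t w)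
end

/-- `V̄↕^Ω(Δ)` as a set of outcome tuples. -/
def WsetD {A Om : Type} (Δ : Wt (SCSP (Sum A Om))) : Set (Om → ℝ) :=
  {o | WMemD Δ o}

/-- The application `T ∥_Act P` of an Ω-test to a process. -/
def applyTestO {A Om : Type} (T : PCSP (Sum A Om)) (P : PCSP A) : PCSP (Sum A Om) :=
  parC (Set.range Sum.inl) T (mapP Sum.inl P)

/-- `A↕^Ω(T,P)` : vector-based testing outcomes of a process. -/
def AO {A Om : Type} (T : PCSP (Sum A Om)) (P : PCSP A) : Set (Om → ℝ) :=
  WsetD (applyTestO T P).interp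

/-- `A↕^Ω(T,Δ)` for a distribution `Δ ∈ D(sCSP)`, via expected values. -/
def AOD {A Om : Type} (T : PCSP (Sum A Om)) (Δ : Wt (SCSP A)) : Set (Om → ℝ) :=
  {o | ∃ g : SCSP A → Om → ℝ,
    (∀ s ∈ dsupp Δ, g s ∈ AO T (.st s)) ∧ o = fun w => ∑ᶠ s, Δ s * g s w}

/-- Hoare preorder on sets of outcome tuples (componentwise order). -/
def HoareLEV {Om : Type} (X Y : Set (Om → ℝ)) : Prop := ∀ x ∈ X, ∃ y ∈ Y, x ≤ y

/-- Smyth preorder on sets of outcome tuples (componentwise order). -/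
def SmythLEV {Om : Type} (X Y : Set (Om → ℝ)) : Prop := ∀ y ∈ Y, ∃ x ∈ X, x ≤ y

/-- The vector-based may-testing preorder `⊑̄^Ω_pmay`. -/
def PMayO {A : Type} (Om : Type) (P Q : PCSP A) : Prop :=
  ∀ T : PCSP (Sum A Om), PWF T → HoareLEV (AO T P) (AO T Q)

/-- The vector-based must-testing preorder `⊑̄^Ω_pmust`. -/
def PMustO {A : Type} (Om : Type) (P Q : PCSP A) : Prop :=
  ∀ T : PCSP (Sum A Om), PWF T → SmythLEV (AO T P) (AO T Q)

/-- The unit outcome vector `ω⃗`. -/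
def unitVec {Om : Type} (w : Om) : Om → ℝ := fun w' => if w' = w then 1 else 0

/-! Occurrence of an action in a process term. -/
mutual
/-- Occurrence of an action in a process term. -/
inductive PUses : {B : Type} → B → PCSP B → Prop where
  | st {B : Type} {b : B} {s} : SUses b s → PUses b (.st s)
  | pchL {B : Type} {b : B} {p P Q} : PUses b P → PUses b (.pch p P Q)
  | pchR {B : Type} {b : B} {p P Q} : PUses b Q → PUses b (.pch p P Q)
inductive SUses : {B : Type} → B → SCSP B → Prop where
  | preAct {B : Type} {b : B} {P} : SUses b (.pre b P)
  | pre {B : Type} {b : B} {a P} : PUses b P → SUses b (.pre a P)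
  | ichL {B : Type} {b : B} {P Q} : PUses b P → SUses b (.ich P Q)
  | ichR {B : Type} {b : B} {P Q} : PUses b Q → SUses b (.ich P Q)
  | echL {B : Type} {b : B} {s t} : SUses b s → SUses b (.ech s t)
  | echR {B : Type} {b : B} {s t} : SUses b t → SUses b (.ech s t)
  | parSet {B : Type} {b : B} {X s t} : b ∈ X → SUses b (.par X s t)
  | parL {B : Type} {b : B} {X s t} : SUses b s → SUses b (.par X s t)
  | parR {B : Type} {b : B} {X s t} : SUses b t → SUses b (.par X s t)
end
/-! ### The modal logic F -/

/-- Modal formulae of the logic `F`. -/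
inductive Form (A : Type) : Type where
  | ref : Set A → Form A
  | dia : A → Form A → Form A
  | conj : (n : ℕ) → (Fin n → Form A) → Form A
  | prob : (n : ℕ) → (Fin n → ℝ) → (Fin n → Form A) → Form A

/-- Well-formed formulae: probabilistic choices carry genuine distributions. -/
inductive WFF {A : Type} : Form A → Prop where
  | ref {X} : WFF (.ref X)
  | dia {a φ} : WFF φ → WFF (.dia a φ)
  | conj {n φs} : (∀ i, WFF (φs i)) → WFF (.conj n φs)
  | prob {n p φs} : (∀ i, 0 ≤ p i) → (∑ i, p i = 1) →
      (∀ i, WFF (φs i)) → WFF (.prob n p φs)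

/-- Formulae of the sublogic `L`: no refusal construct. -/
inductive NoRef {A : Type} : Form A → Prop where
  | dia {a φ} : NoRef φ → NoRef (.dia a φ)
  | conj {n φs} : (∀ i, NoRef (φs i)) → NoRef (.conj n φs)
  | prob {n p φs} : (∀ i, NoRef (φs i)) → NoRef (.prob n p φs)

/-- The satisfaction relation `Δ ⊨ φ`. -/
inductive Sat {A : Type} : Form A → Wt (SCSP A) → Prop where
  | ref {X : Set A} {Δ Δ'} : TauStar Δ Δ' → DRefuses Δ' X → Sat (.ref X) Δ
  | dia {a φ Δ Δ'} : WeakA a Δ Δ' → Sat φ Δ' → Sat (.dia a φ) Δ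
  | conj {n φs Δ} : (∀ i, Sat (φs i) Δ) → Sat (.conj n φs) Δ
  | prob {n} {p : Fin n → ℝ} {φs Δ} (Δs : Fin n → Wt (SCSP A)) :
      (∀ i, Sat (φs i) (Δs i)) →
      TauStar Δ (fun t => ∑ i, p i * Δs i t) →
      Sat (.prob n p φs) Δ

/-- The logical preorder `⊑^L`. -/
def LPre {A : Type} (P Q : PCSP A) : Prop :=
  ∀ φ : Form A, WFF φ → NoRef φ → Sat φ P.interp → Sat φ Q.interp

/-- The logical preorder `⊑^F`. -/
def FPre {A : Type} (P Q : PCSP A) : Prop :=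
  ∀ φ : Form A, WFF φ → Sat φ Q.interp → Sat φ P.interp

mutual
/-- `CharS s φ` : `φ` is an F-characteristic formula `φ_s` of the state `s`. -/
inductive CharS : {A : Type} → SCSP A → Form A → Prop where
  | noTau {A : Type} {s : SCSP A} (n : ℕ) (a : Fin n → A)
      (Δ : Fin n → Wt (SCSP A)) (φ : Fin n → Form A) :
      (∀ Θ, ¬ Step s none Θ) →
      (∀ i, Step s (some (a i)) (Δ i)) →
      (∀ b Θ, Step s (some b) Θ → ∃ i, a i = b ∧ Δ i = Θ) →
      (∀ i, CharD (Δ i) (φ i)) →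
      CharS s (.conj (n+1) (Fin.snoc (fun i => .dia (a i) (φ i))
        (.ref {b : A | ∀ Θ, ¬ Step s (some b) Θ})))
  | tau {A : Type} {s : SCSP A} (n m : ℕ) (a : Fin n → A)
      (Δ : Fin n → Wt (SCSP A)) (φ : Fin n → Form A)
      (Θs : Fin m → Wt (SCSP A)) (ψ : Fin m → Form A) :
      (∃ Θ, Step s none Θ) →
      (∀ i, Step s (some (a i)) (Δ i)) →
      (∀ b Θ, Step s (some b) Θ → ∃ i, a i = b ∧ Δ i = Θ) →
      (∀ j, Step s none (Θs j)) →
      (∀ Θ, Step s none Θ → ∃ j, Θs j = Θ) →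
      (∀ i, CharD (Δ i) (φ i)) →
      (∀ j, CharD (Θs j) (ψ j)) →
      CharS s (.conj (n+m) (Fin.append (fun i => .dia (a i) (φ i)) ψ))
/-- `CharD Δ φ` : `φ` is an F-characteristic formula `φ_Δ` of the distribution `Δ`. -/
inductive CharD : {A : Type} → Wt (SCSP A) → Form A → Prop where
  | mk {A : Type} {Δ : Wt (SCSP A)} (n : ℕ) (s : Fin n → SCSP A) (φ : Fin n → Form A) :
      Function.Injective s →
      (∀ i, s i ∈ dsupp Δ) →
      (∀ t ∈ dsupp Δ, ∃ i, s i = t) →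
      (∀ i, CharS (s i) (φ i)) →
      CharD Δ (.prob n (fun i => Δ (s i)) φ)
end

mutual
/-- `CharSL s ψ` : `ψ` is an L-characteristic formula `ψ_s` of the state `s`. -/
inductive CharSL : {A : Type} → SCSP A → Form A → Prop where
  | noTau {A : Type} {s : SCSP A} (n : ℕ) (a : Fin n → A)
      (Δ : Fin n → Wt (SCSP A)) (φ : Fin n → Form A) :
      (∀ Θ, ¬ Step s none Θ) →
      (∀ i, Step s (some (a i)) (Δ i)) →
      (∀ b Θ, Step s (some b) Θ → ∃ i, a i = b ∧ Δ i = Θ) →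
      (∀ i, CharDL (Δ i) (φ i)) →
      CharSL s (.conj n (fun i => .dia (a i) (φ i)))
  | tau {A : Type} {s : SCSP A} (n m : ℕ) (a : Fin n → A)
      (Δ : Fin n → Wt (SCSP A)) (φ : Fin n → Form A)
      (Θs : Fin m → Wt (SCSP A)) (ψ : Fin m → Form A) :
      (∃ Θ, Step s none Θ) →
      (∀ i, Step s (some (a i)) (Δ i)) →
      (∀ b Θ, Step s (some b) Θ → ∃ i, a i = b ∧ Δ i = Θ) →
      (∀ j, Step s none (Θs j)) →
      (∀ Θ, Step s none Θ → ∃ j, Θs j = Θ) →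
      (∀ i, CharDL (Δ i) (φ i)) →
      (∀ j, CharDL (Θs j) (ψ j)) →
      CharSL s (.conj (n+m) (Fin.append (fun i => .dia (a i) (φ i)) ψ))
/-- `CharDL Δ ψ` : `ψ` is an L-characteristic formula `ψ_Δ` of the distribution `Δ`. -/
inductive CharDL : {A : Type} → Wt (SCSP A) → Form A → Prop where
  | mk {A : Type} {Δ : Wt (SCSP A)} (n : ℕ) (s : Fin n → SCSP A) (φ : Fin n → Form A) :
      Function.Injective s →
      (∀ i, s i ∈ dsupp Δ) →
      (∀ t ∈ dsupp Δ, ∃ i, s i = t) →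
      (∀ i, CharSL (s i) (φ i)) →
      CharDL Δ (.prob n (fun i => Δ (s i)) φ)
end
/-! ### The sub-language nCSP and (in)equational theories -/

mutual
/-- Membership in `nCSP`: no parallel composition. -/
inductive PNoPar : {A : Type} → PCSP A → Prop where
  | st {A : Type} {s : SCSP A} : SNoPar s → PNoPar (.st s)
  | pch {A : Type} {p : ℝ} {P Q : PCSP A} : PNoPar P → PNoPar Q → PNoPar (.pch p P Q)
inductive SNoPar : {A : Type} → SCSP A → Prop where
  | nil {A : Type} : SNoPar (SCSP.nil (A := A))
  | pre {A : Type} {a : A} {P} : PNoPar P → SNoPar (.pre a P)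
  | ich {A : Type} {P Q : PCSP A} : PNoPar P → PNoPar Q → SNoPar (.ich P Q)
  | ech {A : Type} {s t : SCSP A} : SNoPar s → SNoPar t → SNoPar (.ech s t)
end

/-- Initial actions of a state-based term (`none` denotes τ). -/
def initsS {A : Type} : SCSP A → Set (Option A)
  | .nil => ∅
  | .pre a _ => {some a}
  | .ich _ _ => {none}
  | .ech s t => initsS s ∪ initsS t
  | .par _ s t => initsS s ∪ initsS t

/-- Initial actions of a process term. -/
def initsP {A : Type} : PCSP A → Set (Option A)
  | .st s => initsS s
  | .pch _ P Q => initsP P ∪ initsP Q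

/-- Derivability in the equational theory `=_E` of Figure 3. -/
inductive EqE {A : Type} : PCSP A → PCSP A → Prop where
  | refl (P) : EqE P P
  | symm {P Q} : EqE P Q → EqE Q P
  | trans {P Q R} : EqE P Q → EqE Q R → EqE P R
  | congPre (a : A) {P Q} : EqE P Q → EqE (.st (.pre a P)) (.st (.pre a Q))
  | congIch {P₁ P₂ Q₁ Q₂} : EqE P₁ Q₁ → EqE P₂ Q₂ →
      EqE (.st (.ich P₁ P₂)) (.st (.ich Q₁ Q₂))
  | congEch {P₁ P₂ Q₁ Q₂} : EqE P₁ Q₁ → EqE P₂ Q₂ →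
      EqE (echC P₁ P₂) (echC Q₁ Q₂)
  | congPch (p : ℝ) {P₁ P₂ Q₁ Q₂} : EqE P₁ Q₁ → EqE P₂ Q₂ →
      EqE (.pch p P₁ P₂) (.pch p Q₁ Q₂)
  | P1 (p : ℝ) (h₀ : 0 < p) (h₁ : p < 1) (P) : EqE (.pch p P P) P
  | P2 (p : ℝ) (h₀ : 0 < p) (h₁ : p < 1) (P Q) :
      EqE (.pch p P Q) (.pch (1-p) Q P)
  | P3 (p q : ℝ) (hp₀ : 0 < p) (hp₁ : p < 1) (hq₀ : 0 < q) (hq₁ : q < 1) (P Q R) :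
      EqE (.pch q (.pch p P Q) R)
          (.pch (p*q) P (.pch ((1-p)*q/(1-p*q)) Q R))
  | I1 (P) : EqE (.st (.ich P P)) P
  | I2 (P Q) : EqE (.st (.ich P Q)) (.st (.ich Q P))
  | I3 (P Q R) : EqE (.st (.ich (.st (.ich P Q)) R)) (.st (.ich P (.st (.ich Q R))))
  | E1 (P) : EqE (echC P (.st .nil)) P
  | E2 (P Q) : EqE (echC P Q) (echC Q P)
  | E3 (P Q R) : EqE (echC (echC P Q) R) (echC P (echC Q R))
  | EI (a : A) (P Q) :
      EqE (echC (.st (.pre a P)) (.st (.pre a Q)))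
          (.st (.ich (.st (.pre a P)) (.st (.pre a Q))))
  | D1 (p : ℝ) (h₀ : 0 < p) (h₁ : p < 1) (P Q R) :
      EqE (echC P (.pch p Q R)) (.pch p (echC P Q) (echC P R))
  | D2 (a : A) (P Q R) :
      EqE (echC (.st (.pre a P)) (.st (.ich Q R)))
          (.st (.ich (echC (.st (.pre a P)) Q) (echC (.st (.pre a P)) R)))
  | D3 (P₁ P₂ Q₁ Q₂) :
      EqE (echC (.st (.ich P₁ P₂)) (.st (.ich Q₁ Q₂)))
          (.st (.ich
            (.st (.ich (echC P₁ (.st (.ich Q₁ Q₂))) (echC P₂ (.st (.ich Q₁ Q₂)))))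
            (.st (.ich (echC (.st (.ich P₁ P₂)) Q₁) (echC (.st (.ich P₁ P₂)) Q₂)))))

/-- Derivability from the probabilistic axioms P1–P3 and D1 only (`=_prob`). -/
inductive EqProb {A : Type} : PCSP A → PCSP A → Prop where
  | refl (P) : EqProb P P
  | symm {P Q} : EqProb P Q → EqProb Q P
  | trans {P Q R} : EqProb P Q → EqProb Q R → EqProb P R
  | congPre (a : A) {P Q} : EqProb P Q → EqProb (.st (.pre a P)) (.st (.pre a Q))
  | congIch {P₁ P₂ Q₁ Q₂} : EqProb P₁ Q₁ → EqProb P₂ Q₂ →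
      EqProb (.st (.ich P₁ P₂)) (.st (.ich Q₁ Q₂))
  | congEch {P₁ P₂ Q₁ Q₂} : EqProb P₁ Q₁ → EqProb P₂ Q₂ →
      EqProb (echC P₁ P₂) (echC Q₁ Q₂)
  | congPch (p : ℝ) {P₁ P₂ Q₁ Q₂} : EqProb P₁ Q₁ → EqProb P₂ Q₂ →
      EqProb (.pch p P₁ P₂) (.pch p Q₁ Q₂)
  | P1 (p : ℝ) (h₀ : 0 < p) (h₁ : p < 1) (P) : EqProb (.pch p P P) P
  | P2 (p : ℝ) (h₀ : 0 < p) (h₁ : p < 1) (P Q) :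
      EqProb (.pch p P Q) (.pch (1-p) Q P)
  | P3 (p q : ℝ) (hp₀ : 0 < p) (hp₁ : p < 1) (hq₀ : 0 < q) (hq₁ : q < 1) (P Q R) :
      EqProb (.pch q (.pch p P Q) R)
          (.pch (p*q) P (.pch ((1-p)*q/(1-p*q)) Q R))
  | D1 (p : ℝ) (h₀ : 0 < p) (h₁ : p < 1) (P Q R) :
      EqProb (echC P (.pch p Q R)) (.pch p (echC P Q) (echC P R))

mutual
/-- Normal forms. -/
inductive IsNF : {A : Type} → PCSP A → Prop where
  | pch {A : Type} {p : ℝ} {N₁ N₂ : PCSP A} : 0 < p → p < 1 →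
      IsNF N₁ → IsNF N₂ → IsNF (.pch p N₁ N₂)
  | ich {A : Type} {N₁ N₂ : PCSP A} : IsNF N₁ → IsNF N₂ → IsNF (.st (.ich N₁ N₂))
  | ext {A : Type} {s : SCSP A} : IsExtNF s → IsNF (.st s)
/-- External-choice normal forms `◻_{i∈I} a_i.N_i`. -/
inductive IsExtNF : {A : Type} → SCSP A → Prop where
  | nil {A : Type} : IsExtNF (SCSP.nil (A := A))
  | pre {A : Type} {a : A} {N} : IsNF N → IsExtNF (.pre a N)
  | ech {A : Type} {s t : SCSP A} : IsExtNF s → IsExtNF t → IsExtNF (.ech s t)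
end

/-- Derivability in the inequational theory for may testing (`⊑_Emay`). -/
inductive LeMay {A : Type} : PCSP A → PCSP A → Prop where
  | ofEq {P Q} : EqE P Q → LeMay P Q
  | trans {P Q R} : LeMay P Q → LeMay Q R → LeMay P R
  | congPre (a : A) {P Q} : LeMay P Q → LeMay (.st (.pre a P)) (.st (.pre a Q))
  | congIch {P₁ P₂ Q₁ Q₂} : LeMay P₁ Q₁ → LeMay P₂ Q₂ →
      LeMay (.st (.ich P₁ P₂)) (.st (.ich Q₁ Q₂))
  | congEch {P₁ P₂ Q₁ Q₂} : LeMay P₁ Q₁ → LeMay P₂ Q₂ →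
      LeMay (echC P₁ P₂) (echC Q₁ Q₂)
  | congPch (p : ℝ) {P₁ P₂ Q₁ Q₂} : LeMay P₁ Q₁ → LeMay P₂ Q₂ →
      LeMay (.pch p P₁ P₂) (.pch p Q₁ Q₂)
  | may0 (a b : A) (P Q) :
      LeMay (echC (.st (.pre a P)) (.st (.pre b Q)))
            (.st (.ich (.st (.pre a P)) (.st (.pre b Q))))
  | may0' (a b : A) (P Q) :
      LeMay (.st (.ich (.st (.pre a P)) (.st (.pre b Q))))
            (echC (.st (.pre a P)) (.st (.pre b Q)))
  | may1 (P Q) : LeMay P (.st (.ich P Q))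
  | may2 (P) : LeMay (.st .nil) P
  | may3 (a : A) (p : ℝ) (h₀ : 0 < p) (h₁ : p < 1) (P Q) :
      LeMay (.st (.pre a (.pch p P Q))) (.pch p (.st (.pre a P)) (.st (.pre a Q)))

/-- Derivability in the inequational theory for must testing (`⊑_Emust`). -/
inductive LeMust {A : Type} : PCSP A → PCSP A → Prop where
  | ofEq {P Q} : EqE P Q → LeMust P Q
  | trans {P Q R} : LeMust P Q → LeMust Q R → LeMust P R
  | congPre (a : A) {P Q} : LeMust P Q → LeMust (.st (.pre a P)) (.st (.pre a Q))
  | congIch {P₁ P₂ Q₁ Q₂} : LeMust P₁ Q₁ → LeMust P₂ Q₂ →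
      LeMust (.st (.ich P₁ P₂)) (.st (.ich Q₁ Q₂))
  | congEch {P₁ P₂ Q₁ Q₂} : LeMust P₁ Q₁ → LeMust P₂ Q₂ →
      LeMust (echC P₁ P₂) (echC Q₁ Q₂)
  | congPch (p : ℝ) {P₁ P₂ Q₁ Q₂} : LeMust P₁ Q₁ → LeMust P₂ Q₂ →
      LeMust (.pch p P₁ P₂) (.pch p Q₁ Q₂)
  | must1 (P Q) : LeMust (.st (.ich P Q)) Q
  | must2 (n : ℕ) (a : Fin (n+1) → A) (m : Fin (n+1) → ℕ)
      (p : (i : Fin (n+1)) → Fin (m i + 1) → ℝ)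
      (Q : (i : Fin (n+1)) → Fin (m i + 1) → PCSP A)
      (P : (i : Fin (n+1)) → Fin (m i + 1) → PCSP A)
      (R : PCSP A) :
      (∀ i j, 0 ≤ p i j) → (∀ i, ∑ j, p i j = 1) →
      initsP R ⊆ {α | ∃ i, α = some (a i)} →
      LeMust
        (.st (.ich R (ichFin n (fun i =>
          pchFin (m i) (p i) (fun j => echC (.st (.pre (a i) (Q i j))) (P i j))))))
        (.st (echFin n (fun i => .pre (a i) (pchFin (m i) (p i) (Q i)))))

/-!
For a test state `t` and a weight function `Φ` on process states, `liveExpMin t Φ` is the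
expected least outcome of `t ‖ Φ`, where every deadlocked process state is counted at the
value of `t ‖ 0` (deadlocked states are indistinguishable by tests). It is affine in `Φ`, does
not decrease along weak τ-moves of `Φ`, and is the plain expectation on distributions.
By induction on the derivation of an outcome `r` of `t ‖ q`, `liveExpMin t Φ ≤ r` whenever
`q ⊲_FS Φ`: a move of `t ‖ q` is a move of `t`, a τ-move of `q` or a synchronisation, and `Φ`
answers the moves of `q` by weak moves; a deadlock of `t ‖ q` is answered by the refusal clause.
Applied to `⟦Q⟧ ⊲̄_FS Θ` with `⟦P⟧ ==τ̂==> Θ`, this bounds the outcome of `T ‖ P` that always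
takes least outcomes by any outcome of `T ‖ Q`.
-/

section WeightFunctions

variable {X Y : Type}

def mass (Δ : Wt X) : ℝ := ∑ᶠ x, Δ x

/-- `IsDist` without positivity, which fails for terms with probabilistic choices outside
`(0, 1)`. -/
def IsUnitMass (Δ : Wt X) : Prop := (dsupp Δ).Finite ∧ mass Δ = 1

def IsSubDist (Δ : Wt X) : Prop := (∀ x, 0 ≤ Δ x) ∧ (dsupp Δ).Finite ∧ mass Δ ≤ 1

theorem isSubDist_zero : IsSubDist (fun _ : X => (0 : ℝ)) :=
  ⟨fun _ => le_rfl, by simp [dsupp], by simp [mass]⟩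

theorem mem_dsupp {Δ : Wt X} {x : X} : x ∈ dsupp Δ ↔ Δ x ≠ 0 := Iff.rfl

theorem IsDist.isUnitMass {Δ : Wt X} (h : IsDist Δ) : IsUnitMass Δ := ⟨h.2.1, h.2.2⟩

theorem dexp_eq_sum {Δ : Wt X} {s : Finset X} (hs : dsupp Δ ⊆ s) (f : X → ℝ) :
    dexp Δ f = ∑ x ∈ s, Δ x * f x :=
  finsum_eq_sum_of_support_subset _ fun _ hx => hs (left_ne_zero_of_mul hx)

theorem dexp_eq_sum_toFinset {Δ : Wt X} (hΔ : (dsupp Δ).Finite) (f : X → ℝ) :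
    dexp Δ f = ∑ x ∈ hΔ.toFinset, Δ x * f x :=
  dexp_eq_sum (by simp) f

theorem mass_eq_dexp (Δ : Wt X) : mass Δ = dexp Δ fun _ => 1 := by
  simp only [mass, dexp, mul_one]

theorem dexp_congr {Δ : Wt X} {f g : X → ℝ} (h : ∀ x ∈ dsupp Δ, f x = g x) :
    dexp Δ f = dexp Δ g := by
  refine finsum_congr fun x => ?_
  by_cases hx : Δ x = 0
  · simp [hx]
  · rw [h x hx]

theorem dexp_mono {Δ : Wt X} {f g : X → ℝ} (hΔ : (dsupp Δ).Finite) (hpos : ∀ x, 0 ≤ Δ x)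
    (hfg : ∀ x ∈ dsupp Δ, f x ≤ g x) : dexp Δ f ≤ dexp Δ g := by
  rw [dexp_eq_sum_toFinset hΔ, dexp_eq_sum_toFinset hΔ]
  exact Finset.sum_le_sum fun x hx =>
    mul_le_mul_of_nonneg_left (hfg x (hΔ.mem_toFinset.mp hx)) (hpos x)

theorem dexp_const {Δ : Wt X} (hΔ : (dsupp Δ).Finite) (c : ℝ) :
    dexp Δ (fun _ => c) = mass Δ * c := by
  rw [mass_eq_dexp, dexp_eq_sum_toFinset hΔ, dexp_eq_sum_toFinset hΔ, Finset.sum_mul]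
  simp

theorem dexp_add_left {Δ Θ : Wt X} (hΔ : (dsupp Δ).Finite) (hΘ : (dsupp Θ).Finite)
    (a b : ℝ) (f : X → ℝ) :
    dexp (fun x => a * Δ x + b * Θ x) f = a * dexp Δ f + b * dexp Θ f := by
  simp only [dexp, add_mul, mul_finsum, mul_assoc]
  exact finsum_add_distrib (hΔ.subset fun _ hx => left_ne_zero_of_mul (right_ne_zero_of_mul hx))
    (hΘ.subset fun _ hx => left_ne_zero_of_mul (right_ne_zero_of_mul hx))

theorem dexp_add_right {Δ : Wt X} (hΔ : (dsupp Δ).Finite) (f g : X → ℝ) :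
    dexp Δ (fun x => f x + g x) = dexp Δ f + dexp Δ g := by
  rw [dexp_eq_sum_toFinset hΔ, dexp_eq_sum_toFinset hΔ, dexp_eq_sum_toFinset hΔ,
    ← Finset.sum_add_distrib]
  simp only [mul_add]

theorem dexp_smul_right (Δ : Wt X) (c : ℝ) (f : X → ℝ) :
    dexp Δ (fun x => c * f x) = c * dexp Δ f := by
  simp only [dexp, mul_finsum]
  exact finsum_congr fun x => by ring

theorem dexp_sum_right {Δ : Wt X} (hΔ : (dsupp Δ).Finite) {n : ℕ} (p : Fin n → ℝ)
    (G : Fin n → X → ℝ) :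
    dexp Δ (fun x => ∑ i, p i * G i x) = ∑ i, p i * dexp Δ (G i) := by
  simp only [dexp_eq_sum_toFinset hΔ, Finset.mul_sum]
  rw [Finset.sum_comm]
  exact Finset.sum_congr rfl fun i _ => Finset.sum_congr rfl fun x _ => by ring

theorem finite_dexp_of_finite_choices {Δ : Wt X} (hΔ : (dsupp Δ).Finite)
    {F : X → Set ℝ} (hF : ∀ x ∈ dsupp Δ, (F x).Finite) :
    {r | ∃ f : X → ℝ, (∀ x ∈ dsupp Δ, f x ∈ F x) ∧ r = dexp Δ f}.Finite := by
  refine ((Set.Finite.pi (t := fun x : hΔ.toFinset => F x)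
      fun x => hF x (hΔ.mem_toFinset.mp x.2)).image
    fun g => ∑ x : hΔ.toFinset, Δ x * g x).subset ?_
  rintro r ⟨f, hf, rfl⟩
  exact ⟨fun x => f x, fun x _ => hf x (hΔ.mem_toFinset.mp x.2),
    by rw [dexp_eq_sum_toFinset hΔ, ← Finset.sum_coe_sort]⟩

theorem dsupp_dirac (x : X) : dsupp (dirac x) = {x} := by
  ext y
  simp [mem_dsupp, dirac]

theorem eq_of_mem_dsupp_dirac {x y : X} (h : y ∈ dsupp (dirac x)) : y = x := by
  rwa [dsupp_dirac] at h

theorem dexp_dirac (x : X) (f : X → ℝ) : dexp (dirac x) f = f x := by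
  rw [dexp_eq_sum (s := {x}) (by simp [dsupp_dirac])]
  simp [dirac]

theorem isDist_dirac (x : X) : IsDist (dirac x) := by
  refine ⟨fun y => ?_, by simp [dsupp_dirac], ?_⟩
  · unfold dirac
    split <;> norm_num
  · rw [← mass, mass_eq_dexp, dexp_dirac]

theorem dsupp_add_subset (Δ Θ : Wt X) (a b : ℝ) :
    dsupp (fun x => a * Δ x + b * Θ x) ⊆ dsupp Δ ∪ dsupp Θ := by
  intro x hx
  by_contra h
  simp only [Set.mem_union, mem_dsupp, not_or, not_not] at h
  simp [mem_dsupp, h.1, h.2] at hx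

theorem IsUnitMass.add {Δ Θ : Wt X} (hΔ : IsUnitMass Δ) (hΘ : IsUnitMass Θ) (p : ℝ) :
    IsUnitMass (fun x => p * Δ x + (1 - p) * Θ x) := by
  refine ⟨(hΔ.1.union hΘ.1).subset (dsupp_add_subset Δ Θ p (1 - p)), ?_⟩
  rw [mass_eq_dexp, dexp_add_left hΔ.1 hΘ.1, ← mass_eq_dexp, ← mass_eq_dexp, hΔ.2, hΘ.2]
  ring

section Mixtures

variable {n : ℕ} (p : Fin n → ℝ) (Φ : Fin n → Wt X)

theorem dsupp_sum_subset : dsupp (fun x => ∑ i, p i * Φ i x) ⊆ ⋃ i, dsupp (Φ i) := by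
  intro x hx
  obtain ⟨i, -, hi⟩ := Finset.exists_ne_zero_of_sum_ne_zero hx
  exact Set.mem_iUnion.mpr ⟨i, right_ne_zero_of_mul hi⟩

variable {p Φ}

theorem dexp_sum_left (hΦ : ∀ i, (dsupp (Φ i)).Finite) (f : X → ℝ) :
    dexp (fun x => ∑ i, p i * Φ i x) f = ∑ i, p i * dexp (Φ i) f := by
  have hS := Set.finite_iUnion hΦ
  have hsub : ∀ i, dsupp (Φ i) ⊆ hS.toFinset := fun i =>
    (Set.subset_iUnion _ i).trans hS.coe_toFinset.symm.subset
  rw [dexp_eq_sum ((dsupp_sum_subset p Φ).trans hS.coe_toFinset.symm.subset)]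
  simp only [dexp_eq_sum (hsub _), Finset.mul_sum, Finset.sum_mul]
  rw [Finset.sum_comm]
  exact Finset.sum_congr rfl fun i _ => Finset.sum_congr rfl fun x _ => by ring

theorem mass_sum (hΦ : ∀ i, (dsupp (Φ i)).Finite) :
    mass (fun x => ∑ i, p i * Φ i x) = ∑ i, p i * mass (Φ i) := by
  simp only [mass_eq_dexp, dexp_sum_left hΦ]

theorem IsUnitMass.sum (hp : ∑ i, p i = 1) (hΦ : ∀ i, IsUnitMass (Φ i)) :
    IsUnitMass (fun x => ∑ i, p i * Φ i x) := by
  refine ⟨(Set.finite_iUnion fun i => (hΦ i).1).subset (dsupp_sum_subset p Φ), ?_⟩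
  simp [mass_sum fun i => (hΦ i).1, (hΦ _).2, hp]

theorem IsDist.sum (hp₀ : ∀ i, 0 ≤ p i) (hp : ∑ i, p i = 1) (hΦ : ∀ i, IsDist (Φ i)) :
    IsDist (fun x => ∑ i, p i * Φ i x) :=
  ⟨fun x => Finset.sum_nonneg fun i _ => mul_nonneg (hp₀ i) ((hΦ i).1 x),
    (IsUnitMass.sum hp fun i => (hΦ i).isUnitMass).1,
    (IsUnitMass.sum hp fun i => (hΦ i).isUnitMass).2⟩

theorem IsSubDist.sum (hp₀ : ∀ i, 0 ≤ p i) (hp : ∑ i, p i = 1)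
    (hΦ : ∀ i, p i ≠ 0 → IsSubDist (Φ i)) : IsSubDist (fun x => ∑ i, p i * Φ i x) := by
  classical
  let Φ' i : Wt X := if p i = 0 then fun _ => 0 else Φ i
  have hΦ' : ∀ i, IsSubDist (Φ' i) := fun i => by
    by_cases h : p i = 0
    · simpa only [Φ', if_pos h] using isSubDist_zero
    · simpa only [Φ', if_neg h] using hΦ i h
  have hsum : (fun x => ∑ i, p i * Φ i x) = fun x => ∑ i, p i * Φ' i x := by
    funext x
    refine Finset.sum_congr rfl fun i _ => ?_
    by_cases h : p i = 0 <;> simp [Φ', h]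
  rw [hsum]
  refine ⟨fun x => Finset.sum_nonneg fun i _ => mul_nonneg (hp₀ i) ((hΦ' i).1 x),
    (Set.finite_iUnion fun i => (hΦ' i).2.1).subset (dsupp_sum_subset p Φ'), ?_⟩
  rw [mass_eq_dexp, dexp_sum_left fun i => (hΦ' i).2.1]
  calc ∑ i, p i * dexp (Φ' i) (fun _ => 1) ≤ ∑ i, p i := Finset.sum_le_sum fun i _ =>
        mul_le_of_le_one_right (hp₀ i) (mass_eq_dexp (Φ' i) ▸ (hΦ' i).2.2)
    _ = 1 := hp

variable {s : Fin n → X}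

theorem dexp_sum_dirac (f : X → ℝ) :
    dexp (fun x => ∑ i, p i * dirac (s i) x) f = ∑ i, p i * f (s i) := by
  simp only [dexp_sum_left fun i => (isDist_dirac (s i)).2.1, dexp_dirac]

theorem mem_dsupp_sum_dirac (hp₀ : ∀ i, 0 ≤ p i) {i : Fin n} (hi : p i ≠ 0) :
    s i ∈ dsupp (fun x => ∑ j, p j * dirac (s j) x) := by
  refine (lt_of_lt_of_le (lt_of_le_of_ne (hp₀ i) (Ne.symm hi)) ?_).ne'
  simpa [dirac] using Finset.single_le_sum (f := fun j => p j * dirac (s j) (s i))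
    (fun j _ => mul_nonneg (hp₀ j) ((isDist_dirac _).1 _)) (Finset.mem_univ i)

end Mixtures

section Pushforward

variable {Z : Type} {g : X → Y} {Δ : Wt X}

theorem dsupp_dmap_subset : dsupp (dmap g Δ) ⊆ g '' dsupp Δ := by
  intro y hy
  by_contra h
  refine hy (finsum_mem_of_eqOn_zero fun x hx => ?_)
  by_contra hx'
  exact h ⟨x, hx', hx⟩

theorem dmap_eq_sum {s : Finset X} (hs : dsupp Δ ⊆ s) (y : Y) :
    dmap g Δ y = ∑ x ∈ s with g x = y, Δ x := by
  refine finsum_mem_eq_sum_of_inter_support_eq _ (Set.ext fun x => ?_)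
  simp only [Set.mem_inter_iff, Set.mem_ofPred_eq, Finset.coe_filter, Function.mem_support]
  exact ⟨fun h => ⟨⟨hs h.2, h.1⟩, h.2⟩, fun h => ⟨h.1.2, h.2⟩⟩

theorem dexp_dmap (hΔ : (dsupp Δ).Finite) (f : Y → ℝ) :
    dexp (dmap g Δ) f = dexp Δ (fun x => f (g x)) := by
  classical
  have hT : dsupp (dmap g Δ) ⊆ (hΔ.toFinset.image g : Finset Y) := by
    intro y hy
    obtain ⟨x, hx, rfl⟩ := dsupp_dmap_subset hy
    exact Finset.mem_coe.mpr (Finset.mem_image_of_mem g (hΔ.mem_toFinset.mpr hx))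
  rw [dexp_eq_sum hT, dexp_eq_sum_toFinset hΔ, ← Finset.sum_fiberwise_of_maps_to
    (fun x hx => Finset.mem_image_of_mem g hx)]
  refine Finset.sum_congr rfl fun y _ => ?_
  rw [dmap_eq_sum (s := hΔ.toFinset) (by simp) y, Finset.sum_mul]
  exact Finset.sum_congr rfl fun x hx => by rw [(Finset.mem_filter.mp hx).2]

theorem finite_dsupp_dmap (hΔ : (dsupp Δ).Finite) : (dsupp (dmap g Δ)).Finite :=
  (hΔ.image g).subset dsupp_dmap_subset

theorem IsUnitMass.dmap (hΔ : IsUnitMass Δ) : IsUnitMass (dmap g Δ) :=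
  ⟨finite_dsupp_dmap hΔ.1, by
    rw [mass_eq_dexp, dexp_dmap hΔ.1, ← mass_eq_dexp, hΔ.2]⟩

theorem dmap_nonneg (h : ∀ x, 0 ≤ Δ x) (y : Y) : 0 ≤ dmap g Δ y :=
  finsum_nonneg fun x => finsum_nonneg fun _ => h x

theorem IsDist.dmap (hΔ : IsDist Δ) : IsDist (dmap g Δ) :=
  ⟨dmap_nonneg hΔ.1, hΔ.isUnitMass.dmap.1, hΔ.isUnitMass.dmap.2⟩

theorem le_dmap_apply (hΔ : (dsupp Δ).Finite) (h : ∀ x, 0 ≤ Δ x) (x : X) :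
    Δ x ≤ dmap g Δ (g x) := by
  by_cases h0 : Δ x = 0
  · exact h0 ▸ dmap_nonneg h _
  rw [dmap_eq_sum (s := hΔ.toFinset) (by simp)]
  exact Finset.single_le_sum (f := Δ) (fun i _ => h i)
    (Finset.mem_filter.mpr ⟨hΔ.mem_toFinset.mpr h0, rfl⟩)

theorem mem_dsupp_dmap (hΔ : IsDist Δ) {x : X} (hx : x ∈ dsupp Δ) : g x ∈ dsupp (dmap g Δ) :=
  ((lt_of_le_of_ne (hΔ.1 x) (Ne.symm hx)).trans_le (le_dmap_apply hΔ.2.1 hΔ.1 x)).ne'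

theorem dmap_apply_of_injective (hg : Function.Injective g) (x : X) :
    dmap g Δ (g x) = Δ x := by
  rw [dmap, show {x' | g x' = g x} = {x} from Set.ext fun _ => hg.eq_iff,
    finsum_mem_singleton]

theorem dmap_apply_eq_dexp (y : Y) : dmap g Δ y = dexp Δ fun x => if g x = y then 1 else 0 := by
  rw [dmap, finsum_mem_def]
  exact finsum_congr fun x => by by_cases h : g x = y <;> simp [h]

theorem dmap_dmap (hΔ : (dsupp Δ).Finite) (g' : Y → Z) :
    dmap g' (dmap g Δ) = dmap (fun x => g' (g x)) Δ := by
  funext z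
  rw [dmap_apply_eq_dexp, dexp_dmap hΔ, dmap_apply_eq_dexp]

theorem dmap_dirac (x : X) : dmap g (dirac x) = dirac (g x) := by
  funext y
  rw [dmap_apply_eq_dexp, dexp_dirac, dirac]
  simp only [eq_comm]

theorem dmap_add {Θ : Wt X} (hΔ : (dsupp Δ).Finite) (hΘ : (dsupp Θ).Finite) (a b : ℝ) :
    dmap g (fun x => a * Δ x + b * Θ x) = fun y => a * dmap g Δ y + b * dmap g Θ y := by
  funext y
  simp only [dmap_apply_eq_dexp, dexp_add_left hΔ hΘ]

end Pushforward

section Products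

variable {X' Y' : Type} {Δ : Wt X} {Θ : Wt Y}

theorem dsupp_prod_subset : dsupp (fun q : X × Y => Δ q.1 * Θ q.2) ⊆ dsupp Δ ×ˢ dsupp Θ :=
  fun _ hq => ⟨left_ne_zero_of_mul hq, right_ne_zero_of_mul hq⟩

theorem dexp_prod (hΔ : (dsupp Δ).Finite) (hΘ : (dsupp Θ).Finite) (F : X × Y → ℝ) :
    dexp (fun q : X × Y => Δ q.1 * Θ q.2) F = dexp Δ fun x => dexp Θ fun y => F (x, y) := by
  rw [dexp_eq_sum (s := hΔ.toFinset ×ˢ hΘ.toFinset) (by simpa using dsupp_prod_subset),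
    Finset.sum_product, dexp_eq_sum_toFinset hΔ]
  refine Finset.sum_congr rfl fun x _ => ?_
  rw [dexp_eq_sum_toFinset hΘ, Finset.mul_sum]
  exact Finset.sum_congr rfl fun y _ => by ring

theorem dexp_comm (hΔ : (dsupp Δ).Finite) (hΘ : (dsupp Θ).Finite) (F : X → Y → ℝ) :
    (dexp Δ fun x => dexp Θ fun y => F x y) = dexp Θ fun y => dexp Δ fun x => F x y := by
  simp only [dexp_eq_sum_toFinset hΔ, dexp_eq_sum_toFinset hΘ, Finset.mul_sum]
  rw [Finset.sum_comm]
  exact Finset.sum_congr rfl fun y _ => Finset.sum_congr rfl fun x _ => by ring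

theorem IsUnitMass.prod (hΔ : IsUnitMass Δ) (hΘ : IsUnitMass Θ) :
    IsUnitMass (fun q : X × Y => Δ q.1 * Θ q.2) := by
  refine ⟨(hΔ.1.prod hΘ.1).subset dsupp_prod_subset, ?_⟩
  rw [mass_eq_dexp, dexp_prod hΔ.1 hΘ.1]
  simp only [← mass_eq_dexp, hΘ.2, dexp_const hΔ.1, hΔ.2, mul_one]

theorem IsDist.prod (hΔ : IsDist Δ) (hΘ : IsDist Θ) :
    IsDist (fun q : X × Y => Δ q.1 * Θ q.2) :=
  ⟨fun q => mul_nonneg (hΔ.1 q.1) (hΘ.1 q.2), (hΔ.isUnitMass.prod hΘ.isUnitMass).1,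
    (hΔ.isUnitMass.prod hΘ.isUnitMass).2⟩

theorem dmap_prod_dmap (hΔ : (dsupp Δ).Finite) (hΘ : (dsupp Θ).Finite) (g₁ : X → X')
    (g₂ : Y → Y') :
    (fun q : X' × Y' => dmap g₁ Δ q.1 * dmap g₂ Θ q.2)
      = dmap (Prod.map g₁ g₂) (fun q : X × Y => Δ q.1 * Θ q.2) := by
  funext ⟨y₁, y₂⟩
  simp only [dmap_apply_eq_dexp, dexp_prod hΔ hΘ, Prod.map, Prod.mk.injEq]
  rw [mul_comm, ← dexp_smul_right]
  refine dexp_congr fun x₁ _ => ?_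
  rw [mul_comm, ← dexp_smul_right]
  refine dexp_congr fun x₂ _ => ?_
  split_ifs <;> simp_all

end Products

end WeightFunctions

section Processes

variable {C : Type}

theorem PCSP.isUnitMass_interp : ∀ P : PCSP C, IsUnitMass P.interp
  | .st s => (isDist_dirac s).isUnitMass
  | .pch p P Q => (isUnitMass_interp P).add (isUnitMass_interp Q) p

theorem dsupp_interp_pch (p : ℝ) (P Q : PCSP C) :
    dsupp (PCSP.pch p P Q).interp ⊆ dsupp P.interp ∪ dsupp Q.interp :=
  dsupp_add_subset _ _ p (1 - p)

def IsWfDist (Δ : Wt (SCSP C)) : Prop := IsDist Δ ∧ ∀ u ∈ dsupp Δ, SWF u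

theorem IsWfDist.dmap {g : SCSP C → SCSP C} {Δ : Wt (SCSP C)} (hΔ : IsWfDist Δ)
    (hg : ∀ u, SWF u → SWF (g u)) : IsWfDist (dmap g Δ) := by
  refine ⟨hΔ.1.dmap, fun u hu => ?_⟩
  obtain ⟨x, hx, rfl⟩ := dsupp_dmap_subset hu
  exact hg x (hΔ.2 x hx)

theorem PWF.isWfDist_interp : ∀ {P : PCSP C}, PWF P → IsWfDist P.interp
  | .st s, .st h => ⟨isDist_dirac s, fun u hu => eq_of_mem_dsupp_dirac hu ▸ h⟩
  | .pch p P Q, .pch hp₀ hp₁ hP hQ => by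
      obtain ⟨hPd, hPs⟩ := hP.isWfDist_interp
      obtain ⟨hQd, hQs⟩ := hQ.isWfDist_interp
      have hmass := (PCSP.pch p P Q).isUnitMass_interp
      refine ⟨⟨fun x => add_nonneg (mul_nonneg hp₀.le (hPd.1 x))
        (mul_nonneg (sub_nonneg.mpr hp₁.le) (hQd.1 x)), hmass.1, hmass.2⟩, fun u hu => ?_⟩
      rcases dsupp_interp_pch p P Q hu with h | h
      exacts [hPs u h, hQs u h]

mutual
def sizeP : PCSP C → ℕ
  | .st s => sizeS s
  | .pch _ P Q => max (sizeP P) (sizeP Q)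
def sizeS : SCSP C → ℕ
  | .nil => 1
  | .pre _ P => sizeP P + 1
  | .ich P Q => max (sizeP P) (sizeP Q) + 1
  | .ech s t => sizeS s + sizeS t + 1
  | .par _ s t => sizeS s + sizeS t + 1
end

theorem sizeS_le_sizeP_of_mem : ∀ (P : PCSP C), ∀ t ∈ dsupp P.interp, sizeS t ≤ sizeP P
  | .st s, t, ht => by rw [eq_of_mem_dsupp_dirac ht]; rfl
  | .pch p P Q, t, ht => by
      rcases dsupp_interp_pch p P Q ht with h | h
      · exact (sizeS_le_sizeP_of_mem P t h).trans (le_max_left _ _)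
      · exact (sizeS_le_sizeP_of_mem Q t h).trans (le_max_right _ _)

theorem Step.isUnitMass {s : SCSP C} {α : Option C} {Δ : Wt (SCSP C)} (h : Step s α Δ) :
    IsUnitMass Δ := by
  induction h with
  | pre _ P | ichL P _ | ichR _ P => exact P.isUnitMass_interp
  | echL _ ih | echR _ ih => exact ih
  | echTL _ ih | echTR _ ih | parL _ _ ih | parR _ _ ih => exact ih.dmap
  | parS _ _ _ ih₁ ih₂ => exact (ih₁.prod ih₂).dmap

theorem Step.sizeS_lt {s : SCSP C} {α : Option C} {Δ : Wt (SCSP C)} (h : Step s α Δ) :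
    ∀ t ∈ dsupp Δ, sizeS t < sizeS s := by
  induction h with
  | pre _ P => exact fun t ht => Nat.lt_succ_of_le (sizeS_le_sizeP_of_mem P t ht)
  | ichL P Q => exact fun t ht =>
      Nat.lt_succ_of_le ((sizeS_le_sizeP_of_mem P t ht).trans (le_max_left _ _))
  | ichR P Q => exact fun t ht =>
      Nat.lt_succ_of_le ((sizeS_le_sizeP_of_mem Q t ht).trans (le_max_right _ _))
  | echL _ ih | echR _ ih =>
      intro t ht
      have := ih t ht
      simp only [sizeS]
      omega
  | echTL _ ih | echTR _ ih | parL _ _ ih | parR _ _ ih =>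
      intro t ht
      obtain ⟨x, hx, rfl⟩ := dsupp_dmap_subset ht
      have := ih x hx
      simp only [sizeS]
      omega
  | parS _ _ _ ih₁ ih₂ =>
      intro t ht
      obtain ⟨⟨x, y⟩, hxy, rfl⟩ := dsupp_dmap_subset ht
      have := ih₁ x (dsupp_prod_subset hxy).1
      have := ih₂ y (dsupp_prod_subset hxy).2
      simp only [sizeS]
      omega

theorem Step.isWfDist {s : SCSP C} {α : Option C} {Δ : Wt (SCSP C)} (hs : SWF s)
    (h : Step s α Δ) : IsWfDist Δ := by
  induction h with
  | pre => cases hs with | pre h => exact h.isWfDist_interp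
  | ichL => cases hs with | ich h _ => exact h.isWfDist_interp
  | ichR => cases hs with | ich _ h => exact h.isWfDist_interp
  | echL _ ih => cases hs with | ech h _ => exact ih h
  | echR _ ih => cases hs with | ech _ h => exact ih h
  | echTL _ ih => cases hs with | ech h₁ h₂ => exact (ih h₁).dmap fun _ h => .ech h h₂
  | echTR _ ih => cases hs with | ech h₁ h₂ => exact (ih h₂).dmap fun _ h => .ech h₁ h
  | parL _ _ ih => cases hs with | par h₁ h₂ => exact (ih h₁).dmap fun _ h => .par h h₂
  | parR _ _ ih => cases hs with | par h₁ h₂ => exact (ih h₂).dmap fun _ h => .par h₁ h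
  | parS _ _ _ ih₁ ih₂ =>
      cases hs with | par h₁ h₂ =>
      obtain ⟨hΔ, hΔs⟩ := ih₁ h₁
      obtain ⟨hΘ, hΘs⟩ := ih₂ h₂
      refine ⟨(hΔ.prod hΘ).dmap, fun u hu => ?_⟩
      obtain ⟨⟨x, y⟩, hxy, rfl⟩ := dsupp_dmap_subset hu
      exact .par (hΔs x (dsupp_prod_subset hxy).1) (hΘs y (dsupp_prod_subset hxy).2)

end Processes

section FiniteBranching

variable {C : Type}

theorem finite_steps : ∀ s : SCSP C, {p : Option C × Wt (SCSP C) | Step s p.1 p.2}.Finite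
  | .nil => Set.finite_empty.subset fun _ h => nomatch h
  | .pre a P => (Set.finite_singleton (some a, P.interp)).subset fun
      | (_, _), .pre _ _ => rfl
  | .ich P Q => (Set.toFinite {(none, P.interp), (none, Q.interp)}).subset fun
      | (_, _), .ichL _ _ => .inl rfl
      | (_, _), .ichR _ _ => .inr rfl
  | .ech s₁ s₂ => by
      have h₁ := finite_steps s₁
      have h₂ := finite_steps s₂
      refine ((h₁.union h₂).union
        ((h₁.image fun p => (p.1, dmap (fun t => SCSP.ech t s₂) p.2)).union
          (h₂.image fun p => (p.1, dmap (fun t => SCSP.ech s₁ t) p.2)))).subset fun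
        | (_, _), .echL h => .inl (.inl h)
        | (_, _), .echR h => .inl (.inr h)
        | (_, _), .echTL h => .inr (.inl ⟨(_, _), h, rfl⟩)
        | (_, _), .echTR h => .inr (.inr ⟨(_, _), h, rfl⟩)
  | .par B s₁ s₂ => by
      have h₁ := finite_steps s₁
      have h₂ := finite_steps s₂
      refine (((h₁.image fun p => (p.1, dmap (fun t => SCSP.par B t s₂) p.2)).union
        (h₂.image fun p => (p.1, dmap (fun t => SCSP.par B s₁ t) p.2))).union
        ((h₁.prod h₂).image fun pq => ((none : Option C),
          dmap (fun q : SCSP C × SCSP C => SCSP.par B q.1 q.2)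
            (fun q => pq.1.2 q.1 * pq.2.2 q.2)))).subset fun
        | (α, _), .parL (Δ := Δ) h _ => .inl (.inl ⟨(α, Δ), h, rfl⟩)
        | (α, _), .parR (Δ := Δ) h _ => .inl (.inr ⟨(α, Δ), h, rfl⟩)
        | (_, _), .parS _ h h' => .inr ⟨((_, _), (_, _)), ⟨h, h'⟩, rfl⟩

end FiniteBranching

section Results

variable {C : Type} (w : C)

def Deadlocked (s : SCSP C) : Prop := ∀ α Δ, ¬ Step s α Δ

theorem deadlocked_nil : Deadlocked (SCSP.nil : SCSP C) := fun _ _ h => nomatch h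

theorem Deadlocked.refuses {s : SCSP C} (h : Deadlocked s) (X : Set C) : SRefuses s X :=
  ⟨fun Δ => h none Δ, fun a _ => h (some a)⟩

def results (s : SCSP C) : Set ℝ := {r | VMem w s r}

variable {w}

theorem results_of_success {s : SCSP C} (h : ∃ Θ, Step s (some w) Θ) : results w s = {1} := by
  obtain ⟨Θ, hΘ⟩ := h
  refine Set.eq_singleton_iff_unique_mem.mpr ⟨VMem.succ hΘ, fun r hr => ?_⟩
  cases hr with
  | succ => rfl
  | step _ hno => exact absurd hΘ (hno Θ)
  | stuck hd => exact absurd hΘ (hd _ Θ)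

theorem results_of_deadlocked {s : SCSP C} (h : Deadlocked s) : results w s = {0} := by
  refine Set.eq_singleton_iff_unique_mem.mpr ⟨VMem.stuck h, fun r hr => ?_⟩
  cases hr with
  | succ hs | step _ _ hs => exact absurd hs (h _ _)
  | stuck => rfl

theorem results_finite_nonempty (s : SCSP C) : (results w s).Finite ∧ (results w s).Nonempty := by
  induction hn : sizeS s using Nat.strong_induction_on generalizing s with
  | _ n ih =>
  have ih' {α Δ} (h : Step s α Δ) (t) (ht : t ∈ dsupp Δ) :=
    ih _ (hn ▸ h.sizeS_lt t ht) t rfl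
  by_cases hω : ∃ Θ, Step s (some w) Θ
  · simp [results_of_success hω]
  by_cases hd : Deadlocked s
  · simp [results_of_deadlocked hd]
  obtain ⟨α, Δ, h⟩ : ∃ α Δ, Step s α Δ := by simpa [Deadlocked] using hd
  rw [not_exists] at hω
  constructor
  · refine ((finite_steps s).biUnion fun p (hp : Step s p.1 p.2) =>
      finite_dexp_of_finite_choices hp.isUnitMass.1 fun t ht => (ih' hp t ht).1).subset ?_
    intro r hr
    cases hr with
    | succ h => exact absurd h (hω _)
    | stuck h => exact absurd h hd
    | step f _ h hf => exact Set.mem_biUnion (x := (_, _)) h ⟨f, hf, rfl⟩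
  · exact ⟨_, VMem.step (fun t => sInf (results w t)) hω h fun t ht =>
      (ih' h t ht).2.csInf_mem (ih' h t ht).1⟩

variable (w)

def minResult (s : SCSP C) : ℝ := sInf (results w s)

variable {w}

theorem vmem_minResult (s : SCSP C) : VMem w s (minResult w s) :=
  (results_finite_nonempty s).2.csInf_mem (results_finite_nonempty s).1

theorem minResult_le {s : SCSP C} {r : ℝ} (h : VMem w s r) : minResult w s ≤ r :=
  csInf_le (results_finite_nonempty s).1.bddBelow h

theorem minResult_of_success {s : SCSP C} (h : ∃ Θ, Step s (some w) Θ) : minResult w s = 1 := by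
  rw [minResult, results_of_success h, csInf_singleton]

theorem minResult_of_deadlocked {s : SCSP C} (h : Deadlocked s) : minResult w s = 0 := by
  rw [minResult, results_of_deadlocked h, csInf_singleton]

theorem minResult_le_dexp {s : SCSP C} {α : Option C} {Δ : Wt (SCSP C)}
    (hω : ∀ Θ, ¬ Step s (some w) Θ) (h : Step s α Δ) : minResult w s ≤ dexp Δ (minResult w) :=
  minResult_le (.step _ hω h fun t _ => vmem_minResult t)

end Results

section Renaming

variable {A B : Type} {f : A → B}

theorem interp_mapP (f : A → B) : ∀ P : PCSP A, (mapP f P).interp = dmap (mapS f) P.interp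
  | .st s => (dmap_dirac s).symm
  | .pch p P Q => by
      show (fun t => p * (mapP f P).interp t + (1 - p) * (mapP f Q).interp t)
        = dmap (mapS f) fun t => p * P.interp t + (1 - p) * Q.interp t
      rw [interp_mapP f P, interp_mapP f Q,
        dmap_add P.isUnitMass_interp.1 Q.isUnitMass_interp.1]

theorem map_notMem_image (hf : Function.Injective f) {α : Option A} {X : Set A}
    (h : ∀ a, α = some a → a ∉ X) : ∀ b, α.map f = some b → b ∉ f '' X := by
  rintro b hb ⟨a, ha, rfl⟩
  obtain ⟨a', rfl, ha'⟩ := Option.map_eq_some_iff.mp hb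
  exact h a' rfl (hf ha' ▸ ha)

theorem Step.rename (hf : Function.Injective f) {s : SCSP A} {α : Option A} {Δ : Wt (SCSP A)}
    (h : Step s α Δ) : Step (mapS f s) (α.map f) (dmap (mapS f) Δ) := by
  induction h with
  | pre a P => rw [← interp_mapP]; exact .pre _ _
  | ichL P Q => rw [← interp_mapP]; exact .ichL _ _
  | ichR P Q => rw [← interp_mapP]; exact .ichR _ _
  | echL _ ih => exact .echL ih
  | echR _ ih => exact .echR ih
  | echTL h ih =>
      simp only [mapS, Option.map_none, dmap_dmap h.isUnitMass.1]
      simpa only [dmap_dmap h.isUnitMass.1] using Step.echTL (s₂ := mapS f _) ih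
  | echTR h ih =>
      simp only [mapS, Option.map_none, dmap_dmap h.isUnitMass.1]
      simpa only [dmap_dmap h.isUnitMass.1] using Step.echTR (s₁ := mapS f _) ih
  | parL h hX ih =>
      simp only [mapS, dmap_dmap h.isUnitMass.1]
      simpa only [dmap_dmap h.isUnitMass.1] using
        Step.parL (s₂ := mapS f _) ih (map_notMem_image hf hX)
  | parR h hX ih =>
      simp only [mapS, dmap_dmap h.isUnitMass.1]
      simpa only [dmap_dmap h.isUnitMass.1] using
        Step.parR (s₁ := mapS f _) ih (map_notMem_image hf hX)
  | parS ha h₁ h₂ ih₁ ih₂ =>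
      have hprod := (h₁.isUnitMass.prod h₂.isUnitMass).1
      simp only [mapS, Option.map_none, dmap_dmap hprod]
      simpa only [dmap_prod_dmap h₁.isUnitMass.1 h₂.isUnitMass.1, dmap_dmap hprod, Prod.map_fst,
        Prod.map_snd] using
        Step.parS (Set.mem_image_of_mem f ha) ih₁ ih₂

theorem Step.of_rename (hf : Function.Injective f) {u : SCSP B} {β : Option B}
    {Δ' : Wt (SCSP B)} (h : Step u β Δ') :
    ∀ q : SCSP A, mapS f q = u →
      ∃ α Δ, Step q α Δ ∧ β = α.map f ∧ Δ' = dmap (mapS f) Δ := by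
  induction h with
  | pre b P' =>
      rintro (_ | ⟨a, P⟩ | _ | _ | _) hq <;> simp only [mapS, SCSP.pre.injEq, reduceCtorEq] at hq
      obtain ⟨rfl, rfl⟩ := hq
      exact ⟨_, _, .pre a P, rfl, interp_mapP f P⟩
  | ichL P' Q' =>
      rintro (_ | _ | ⟨P, Q⟩ | _ | _) hq <;> simp only [mapS, SCSP.ich.injEq, reduceCtorEq] at hq
      obtain ⟨rfl, rfl⟩ := hq
      exact ⟨_, _, .ichL P Q, rfl, interp_mapP f P⟩
  | ichR P' Q' =>
      rintro (_ | _ | ⟨P, Q⟩ | _ | _) hq <;> simp only [mapS, SCSP.ich.injEq, reduceCtorEq] at hq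
      obtain ⟨rfl, rfl⟩ := hq
      exact ⟨_, _, .ichR P Q, rfl, interp_mapP f Q⟩
  | echL _ ih =>
      rintro (_ | _ | _ | ⟨q₁, q₂⟩ | _) hq <;> simp only [mapS, SCSP.ech.injEq, reduceCtorEq] at hq
      obtain ⟨_ | a, Δ, h, hβ, rfl⟩ := ih q₁ hq.1
      · simp at hβ
      · exact ⟨_, _, .echL h, hβ, rfl⟩
  | echR _ ih =>
      rintro (_ | _ | _ | ⟨q₁, q₂⟩ | _) hq <;> simp only [mapS, SCSP.ech.injEq, reduceCtorEq] at hq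
      obtain ⟨_ | a, Δ, h, hβ, rfl⟩ := ih q₂ hq.2
      · simp at hβ
      · exact ⟨_, _, .echR h, hβ, rfl⟩
  | echTL _ ih =>
      rintro (_ | _ | _ | ⟨q₁, q₂⟩ | _) hq <;> simp only [mapS, SCSP.ech.injEq, reduceCtorEq] at hq
      obtain ⟨hq₁, rfl⟩ := hq
      obtain ⟨_ | a, Δ, h, hβ, rfl⟩ := ih q₁ hq₁
      · refine ⟨_, _, .echTL h, rfl, ?_⟩
        simp only [dmap_dmap h.isUnitMass.1, mapS]
      · simp at hβ
  | echTR _ ih =>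
      rintro (_ | _ | _ | ⟨q₁, q₂⟩ | _) hq <;> simp only [mapS, SCSP.ech.injEq, reduceCtorEq] at hq
      obtain ⟨rfl, hq₂⟩ := hq
      obtain ⟨_ | a, Δ, h, hβ, rfl⟩ := ih q₂ hq₂
      · refine ⟨_, _, .echTR h, rfl, ?_⟩
        simp only [dmap_dmap h.isUnitMass.1, mapS]
      · simp at hβ
  | parL _ hX ih =>
      rintro (_ | _ | _ | _ | ⟨X, q₁, q₂⟩) hq <;>
        simp only [mapS, SCSP.par.injEq, reduceCtorEq] at hq
      obtain ⟨rfl, hq₁, rfl⟩ := hq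
      obtain ⟨α, Δ, h, rfl, rfl⟩ := ih q₁ hq₁
      refine ⟨_, _, .parL h fun a ha haX => hX (f a) (by rw [ha]; rfl) ⟨a, haX, rfl⟩, rfl, ?_⟩
      simp only [dmap_dmap h.isUnitMass.1, mapS]
  | parR _ hX ih =>
      rintro (_ | _ | _ | _ | ⟨X, q₁, q₂⟩) hq <;>
        simp only [mapS, SCSP.par.injEq, reduceCtorEq] at hq
      obtain ⟨rfl, rfl, hq₂⟩ := hq
      obtain ⟨α, Δ, h, rfl, rfl⟩ := ih q₂ hq₂
      refine ⟨_, _, .parR h fun a ha haX => hX (f a) (by rw [ha]; rfl) ⟨a, haX, rfl⟩, rfl, ?_⟩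
      simp only [dmap_dmap h.isUnitMass.1, mapS]
  | parS hb _ _ ih₁ ih₂ =>
      rintro (_ | _ | _ | _ | ⟨X, q₁, q₂⟩) hq <;>
        simp only [mapS, SCSP.par.injEq, reduceCtorEq] at hq
      obtain ⟨rfl, hq₁, hq₂⟩ := hq
      obtain ⟨a, haX, rfl⟩ := hb
      obtain ⟨_ | a₁, Δ₁, h₁, hβ₁, rfl⟩ := ih₁ q₁ hq₁
      · simp at hβ₁
      obtain ⟨_ | a₂, Δ₂, h₂, hβ₂, rfl⟩ := ih₂ q₂ hq₂
      · simp at hβ₂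
      obtain rfl : a₁ = a := hf (Option.some_injective _ hβ₁).symm
      obtain rfl : a₂ = a₁ := hf (Option.some_injective _ hβ₂).symm
      refine ⟨_, _, .parS haX h₁ h₂, rfl, ?_⟩
      rw [dmap_prod_dmap h₁.isUnitMass.1 h₂.isUnitMass.1,
        dmap_dmap (h₁.isUnitMass.prod h₂.isUnitMass).1,
        dmap_dmap (h₁.isUnitMass.prod h₂.isUnitMass).1]
      simp only [mapS, Prod.map_fst, Prod.map_snd]

end Renaming

section Testing

variable {A : Type}

def testPar (t : SCSP (TAct A)) (q : SCSP A) : SCSP (TAct A) :=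
  .par (Set.range Sum.inl) t (mapS Sum.inl q)

def parDist (Θ : Wt (SCSP (TAct A))) (Δ : Wt (SCSP A)) : Wt (SCSP (TAct A)) :=
  dmap (fun pr : SCSP (TAct A) × SCSP (TAct A) => .par (Set.range Sum.inl) pr.1 pr.2)
    (fun pr => Θ pr.1 * dmap (mapS Sum.inl) Δ pr.2)

theorem testPar_injective_left (q : SCSP A) : Function.Injective (testPar · q) :=
  fun _ _ h => (SCSP.par.inj h).2.1

theorem dexp_parDist {Θ : Wt (SCSP (TAct A))} {Δ : Wt (SCSP A)} (hΘ : (dsupp Θ).Finite)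
    (hΔ : (dsupp Δ).Finite) (f : SCSP (TAct A) → ℝ) :
    dexp (parDist Θ Δ) f = dexp Θ fun t => dexp Δ fun q => f (testPar t q) := by
  have hΔ' := finite_dsupp_dmap (g := mapS (Sum.inl : A → TAct A)) hΔ
  rw [parDist, dexp_dmap ((hΘ.prod hΔ').subset dsupp_prod_subset), dexp_prod hΘ hΔ']
  exact dexp_congr fun t _ => dexp_dmap hΔ _

theorem mem_dsupp_parDist {Θ : Wt (SCSP (TAct A))} {Δ : Wt (SCSP A)} (hΘ : IsDist Θ)
    (hΔ : IsDist Δ) {t : SCSP (TAct A)} {q : SCSP A} (ht : t ∈ dsupp Θ) (hq : q ∈ dsupp Δ) :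
    testPar t q ∈ dsupp (parDist Θ Δ) :=
  mem_dsupp_dmap (hΘ.prod hΔ.dmap)
    (show (t, mapS Sum.inl q) ∈ dsupp _ from mul_ne_zero ht (mem_dsupp_dmap hΔ hq))

theorem omA_notMem_range : (omA : TAct A) ∉ Set.range Sum.inl := fun ⟨_, h⟩ => nomatch h

variable {t : SCSP (TAct A)} {q : SCSP A}

theorem Step.testPar_left {γ : Option (TAct A)} {Θ : Wt (SCSP (TAct A))} (h : Step t γ Θ)
    (hγ : γ = none ∨ γ = some omA) : Step (testPar t q) γ (dmap (testPar · q) Θ) :=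
  .parL h fun a ha => by
    rcases hγ with rfl | rfl
    · cases ha
    · exact Option.some_injective _ ha ▸ omA_notMem_range

theorem Step.testPar_right {Δ : Wt (SCSP A)} (h : Step q none Δ) :
    Step (testPar t q) none (dmap (testPar t ·) Δ) := by
  have h' := Step.parR (B := Set.range Sum.inl) (s₁ := t) (h.rename Sum.inl_injective) (by simp)
  rwa [dmap_dmap h.isUnitMass.1] at h'

theorem Step.testPar_sync {a : A} {Θ : Wt (SCSP (TAct A))} {Δ : Wt (SCSP A)}
    (ht : Step t (some (Sum.inl a)) Θ) (hq : Step q (some a) Δ) :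
    Step (testPar t q) none (parDist Θ Δ) :=
  .parS ⟨a, rfl⟩ ht (hq.rename Sum.inl_injective)

theorem Step.testPar_cases {γ : Option (TAct A)} {Δc : Wt (SCSP (TAct A))}
    (h : Step (testPar t q) γ Δc) :
    (∃ Θ, Step t γ Θ ∧ (γ = none ∨ γ = some omA) ∧ Δc = dmap (testPar · q) Θ) ∨
    (∃ Δ, Step q none Δ ∧ γ = none ∧ Δc = dmap (testPar t ·) Δ) ∨
    (∃ a Θ Δ, γ = none ∧ Step t (some (Sum.inl a)) Θ ∧ Step q (some a) Δ ∧
      Δc = parDist Θ Δ) := by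
  cases h with
  | parL h hγ =>
      refine .inl ⟨_, h, ?_, rfl⟩
      rcases γ with _ | _ | ⟨⟩
      · exact .inl rfl
      · exact absurd ⟨_, rfl⟩ (hγ _ rfl)
      · exact .inr rfl
  | parR h hγ =>
      obtain ⟨_ | a, Δ, hq, rfl, rfl⟩ := h.of_rename Sum.inl_injective q rfl
      · exact .inr (.inl ⟨Δ, hq, rfl, by rw [dmap_dmap hq.isUnitMass.1]; rfl⟩)
      · exact absurd ⟨a, rfl⟩ (hγ _ rfl)
  | parS hb ht hq =>
      obtain ⟨a, rfl⟩ := hb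
      obtain ⟨_ | a', Δ, hq', hβ, rfl⟩ := hq.of_rename Sum.inl_injective q rfl
      · cases hβ
      obtain rfl : a' = a := Sum.inl_injective (Option.some_injective _ hβ).symm
      exact .inr (.inr ⟨a', _, Δ, rfl, ht, hq', rfl⟩)

theorem testPar_success_iff :
    (∃ Θ, Step (testPar t q) (some omA) Θ) ↔ ∃ Θ, Step t (some omA) Θ := by
  refine ⟨fun ⟨_, h⟩ => ?_, fun ⟨_, h⟩ => ⟨_, h.testPar_left (.inr rfl)⟩⟩
  rcases h.testPar_cases with ⟨Θ, h, -⟩ | ⟨_, _, h, _⟩ | ⟨_, _, _, h, _⟩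
  · exact ⟨Θ, h⟩
  all_goals cases h

end Testing

section DeadlockedProcesses

variable {A : Type} {t : SCSP (TAct A)} {q q' : SCSP A}

theorem not_success_testPar (ht : ∀ Θ, ¬ Step t (some omA) Θ) :
    ∀ Θ, ¬ Step (testPar t q) (some omA) Θ := fun Θ h =>
  let ⟨_, h'⟩ := testPar_success_iff.mp ⟨Θ, h⟩
  ht _ h'

theorem Step.testPar_of_deadlocked {γ : Option (TAct A)} {Δc : Wt (SCSP (TAct A))}
    (hq : Deadlocked q) (h : Step (testPar t q) γ Δc) :
    ∃ Θ, Step t γ Θ ∧ (γ = none ∨ γ = some omA) ∧ Δc = dmap (testPar · q) Θ := by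
  rcases h.testPar_cases with h | ⟨_, h, -⟩ | ⟨_, _, _, -, -, h, -⟩
  · exact h
  all_goals exact absurd h (hq _ _)

theorem vmem_testPar_of_deadlocked (hq : Deadlocked q) (hq' : Deadlocked q')
    {s : SCSP (TAct A)} {r : ℝ} (h : VMem omA s r) :
    ∀ t, s = testPar t q → VMem omA (testPar t q') r := by
  induction h with
  | succ hs =>
      rintro t rfl
      obtain ⟨Θ, hΘ⟩ := testPar_success_iff.mp ⟨_, hs⟩
      exact .succ (hΘ.testPar_left (.inr rfl))
  | step f hno hs _ ih =>
      rintro t rfl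
      obtain ⟨Θ, ht, hγ, rfl⟩ := hs.testPar_of_deadlocked hq
      let f' : SCSP (TAct A) → ℝ
        | .par _ t' _ => f (testPar t' q)
        | _ => 0
      have h' := VMem.step f' (not_success_testPar fun Θ h => hno _ (h.testPar_left (.inr rfl)))
        (ht.testPar_left hγ) fun u hu => by
          obtain ⟨t', ht', rfl⟩ := dsupp_dmap_subset hu
          refine ih _ ?_ t' rfl
          rwa [mem_dsupp, dmap_apply_of_injective (testPar_injective_left q)]
      rw [dexp_dmap ht.isUnitMass.1]
      rwa [dexp_dmap ht.isUnitMass.1] at h'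
  | stuck hd =>
      rintro t rfl
      refine .stuck fun γ Δc h => ?_
      obtain ⟨Θ, ht, hγ, -⟩ := h.testPar_of_deadlocked hq'
      exact hd _ _ (ht.testPar_left hγ)

theorem minResult_testPar_of_deadlocked (hq : Deadlocked q) (hq' : Deadlocked q') :
    minResult omA (testPar t q) = minResult omA (testPar t q') :=
  le_antisymm (minResult_le (vmem_testPar_of_deadlocked hq' hq (vmem_minResult _) t rfl))
    (minResult_le (vmem_testPar_of_deadlocked hq hq' (vmem_minResult _) t rfl))

end DeadlockedProcesses

section FailureSimulation

variable {C : Type} {R : SCSP C → Wt (SCSP C) → Prop} {q : SCSP C} {Φ Θ Δ : Wt (SCSP C)}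

theorem Lift.isDist_left (h : Lift R Δ Θ) : IsDist Δ := by
  obtain ⟨n, p, s, -, hp₀, hp, rfl, -⟩ := h
  exact IsDist.sum hp₀ hp fun i => isDist_dirac (s i)

theorem Lift.mono {R' : SCSP C → Wt (SCSP C) → Prop} (hRR' : ∀ s Θ, R s Θ → R' s Θ)
    (h : Lift R Δ Θ) : Lift R' Δ Θ :=
  let ⟨n, p, s, Φ, h₁, h₂, h₃, h₄, h₅⟩ := h
  ⟨n, p, s, Φ, h₁, h₂, h₃, fun i => hRR' _ _ (h₄ i), h₅⟩

theorem TauStar.eq_or_isDist (h : TauStar Φ Θ) : Θ = Φ ∨ IsDist Φ := by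
  rcases Relation.ReflTransGen.cases_head h with rfl | ⟨_, h, -⟩
  · exact .inl rfl
  · exact .inr h.isDist_left

theorem WeakA.isDist_left {a : C} (h : WeakA a Φ Θ) : IsDist Φ := by
  obtain ⟨_, _, hτ, hstep, -⟩ := h
  rcases hτ.eq_or_isDist with rfl | h
  exacts [hstep.isDist_left, h]

theorem fsimLE.step {α : Option C} (h : fsimLE q Φ) (hs : Step q α Δ) :
    ∃ Θ, Weak α Φ Θ ∧ Lift fsimLE Δ Θ := by
  obtain ⟨R, hR, hqΦ⟩ := h
  obtain ⟨Θ, hw, hl⟩ := hR.1 q Φ α Δ hqΦ hs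
  exact ⟨Θ, hw, hl.mono fun s Θ hsΘ => ⟨R, hR, hsΘ⟩⟩

theorem fsimLE.refusal {X : Set C} (h : fsimLE q Φ) (hr : SRefuses q X) :
    ∃ Θ, TauStar Φ Θ ∧ DRefuses Θ X :=
  let ⟨_, hR, hqΦ⟩ := h
  hR.2 q Φ X hqΦ hr

end FailureSimulation

section LivePart

variable {C : Type} {Φ : Wt (SCSP C)}

def livePart (Φ : Wt (SCSP C)) : Wt (SCSP C) := fun u => if Deadlocked u then 0 else Φ u

def deadPart (Φ : Wt (SCSP C)) : Wt (SCSP C) := fun u => if Deadlocked u then Φ u else 0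

theorem dsupp_livePart_subset (Φ : Wt (SCSP C)) : dsupp (livePart Φ) ⊆ dsupp Φ :=
  fun u hu h => hu (by simp [livePart, h])

theorem dsupp_deadPart_subset (Φ : Wt (SCSP C)) : dsupp (deadPart Φ) ⊆ dsupp Φ :=
  fun u hu h => hu (by simp [deadPart, h])

theorem dexp_livePart_add_deadPart (hΦ : (dsupp Φ).Finite) (f : SCSP C → ℝ) :
    dexp (livePart Φ) f + dexp (deadPart Φ) f = dexp Φ f := by
  rw [← one_mul (dexp (livePart Φ) f), ← one_mul (dexp (deadPart Φ) f),
    ← dexp_add_left (hΦ.subset (dsupp_livePart_subset Φ)) (hΦ.subset (dsupp_deadPart_subset Φ))]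
  refine congrArg (dexp · f) (funext fun u => ?_)
  by_cases h : Deadlocked u <;> simp [livePart, deadPart, h]

theorem livePart_sum {n : ℕ} (p : Fin n → ℝ) (Φ : Fin n → Wt (SCSP C)) :
    livePart (fun u => ∑ i, p i * Φ i u) = fun u => ∑ i, p i * livePart (Φ i) u := by
  funext u
  by_cases h : Deadlocked u <;> simp [livePart, h]

theorem IsDist.isSubDist_livePart (h : IsDist Φ) : IsSubDist (livePart Φ) := by
  refine ⟨fun u => ?_, h.2.1.subset (dsupp_livePart_subset Φ), ?_⟩
  · by_cases hu : Deadlocked u <;> simp [livePart, hu, h.1 u]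
  · have hdead : 0 ≤ mass (deadPart Φ) := finsum_nonneg fun u => by
      by_cases hu : Deadlocked u <;> simp [deadPart, hu, h.1 u]
    have := dexp_livePart_add_deadPart h.2.1 fun _ => 1
    rw [← mass_eq_dexp, ← mass_eq_dexp, ← mass_eq_dexp, show mass Φ = 1 from h.2.2] at this
    linarith

/-- `fsimLE q Φ` does not make `Φ` a distribution: a deadlocked `q` may be related to any
weight function on deadlocked states. -/
theorem isSubDist_livePart_of_fsimLE {q : SCSP C} (h : fsimLE q Φ) : IsSubDist (livePart Φ) := by
  induction hn : sizeS q using Nat.strong_induction_on generalizing q Φ with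
  | _ n ih =>
  by_cases hΦ : IsDist Φ
  · exact hΦ.isSubDist_livePart
  by_cases hq : Deadlocked q
  · obtain ⟨Θ, hτ, hr⟩ := h.refusal (hq.refuses Set.univ)
    obtain rfl := hτ.eq_or_isDist.resolve_right hΦ
    have : livePart Θ = fun _ => 0 := funext fun u => by
      by_cases hu : Θ u = 0
      · simp [livePart, hu]
      · have hd : Deadlocked u := fun
          | none, _, hs => (hr u hu).1 _ hs
          | some a, _, hs => (hr u hu).2 a trivial _ hs
        simp [livePart, hd]
    exact this ▸ isSubDist_zero
  obtain ⟨α, Δ, hs⟩ : ∃ α Δ, Step q α Δ := by simpa [Deadlocked] using hq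
  obtain ⟨Θ, hw, m, p, x, Ψ, hp₀, hp, rfl, hxΨ, rfl⟩ := h.step hs
  rcases α with _ | a
  · obtain rfl := (hw : TauStar Φ _).eq_or_isDist.resolve_right hΦ
    rw [livePart_sum]
    refine IsSubDist.sum hp₀ hp fun i hi => ih _ ?_ (hxΨ i) rfl
    exact hn ▸ hs.sizeS_lt _ (mem_dsupp_sum_dirac hp₀ hi)
  · exact absurd (hw : WeakA a Φ _).isDist_left hΦ

end LivePart

section MinimalOutcome

variable {A : Type} {t : SCSP (TAct A)} {q : SCSP A} {Φ Θ : Wt (SCSP A)}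

def expMin (t : SCSP (TAct A)) (Φ : Wt (SCSP A)) : ℝ :=
  dexp Φ fun u => minResult omA (testPar t u)

def deadValue (t : SCSP (TAct A)) : ℝ := minResult omA (testPar t .nil)

/-- Counting deadlocked states at `deadValue t` (they are all alike to `t`, see
`minResult_testPar_of_deadlocked`) makes this agree with `expMin t Φ` on distributions while
depending only on `livePart Φ`, the part of `Φ` that a failure simulation controls. -/
def liveExpMin (t : SCSP (TAct A)) (Φ : Wt (SCSP A)) : ℝ :=
  expMin t (livePart Φ) + (1 - mass (livePart Φ)) * deadValue t

theorem deadlocked_testPar_iff :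
    Deadlocked (testPar t q) ↔ (∀ γ Θ, γ = none ∨ γ = some omA → ¬ Step t γ Θ) ∧
      SRefuses q {a | ∃ Θ, Step t (some (Sum.inl a)) Θ} := by
  constructor
  · intro h
    exact ⟨fun γ Θ hγ ht => h _ _ (ht.testPar_left hγ), fun Δ hq => h _ _ hq.testPar_right,
      fun a ⟨Θ, ht⟩ Δ hq => h _ _ (ht.testPar_sync hq)⟩
  · rintro ⟨ht, hτ, hq⟩ γ Δc h
    rcases h.testPar_cases with ⟨Θ, h, hγ, -⟩ | ⟨Δ, h, -⟩ | ⟨a, Θ, Δ, -, h, h', -⟩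
    · exact ht _ _ hγ h
    · exact hτ _ h
    · exact hq a ⟨Θ, h⟩ _ h'

theorem liveExpMin_eq_expMin (hΦ : IsUnitMass Φ) : liveExpMin t Φ = expMin t Φ := by
  have hdead : dexp (deadPart Φ) (fun u => minResult omA (testPar t u))
      = mass (deadPart Φ) * deadValue t := by
    rw [← dexp_const (hΦ.1.subset (dsupp_deadPart_subset Φ))]
    refine dexp_congr fun u hu => minResult_testPar_of_deadlocked ?_ deadlocked_nil
    by_contra h
    exact hu (by simp [deadPart, h])
  have hmass := dexp_livePart_add_deadPart hΦ.1 fun _ => 1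
  rw [← mass_eq_dexp, ← mass_eq_dexp, ← mass_eq_dexp, hΦ.2] at hmass
  rw [liveExpMin, expMin, expMin, ← dexp_livePart_add_deadPart hΦ.1, hdead, ← hmass]
  ring

theorem liveExpMin_of_success (hω : ∃ Θ, Step t (some omA) Θ)
    (hΦ : (dsupp (livePart Φ)).Finite) : liveExpMin t Φ = 1 := by
  have h1 (u : SCSP A) : minResult omA (testPar t u) = 1 :=
    minResult_of_success (testPar_success_iff.mpr hω)
  simp only [liveExpMin, expMin, deadValue, h1, dexp_const hΦ]
  ring

theorem liveExpMin_eq_zero (h : ∀ u ∈ dsupp Φ, Deadlocked (testPar t u))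
    (hnil : Deadlocked (testPar t .nil)) : liveExpMin t Φ = 0 := by
  rw [liveExpMin, deadValue, minResult_of_deadlocked hnil, expMin, dexp_congr (g := fun _ => 0)
    fun u hu => minResult_of_deadlocked (h u (dsupp_livePart_subset Φ hu))]
  simp [dexp]

theorem liveExpMin_sum {n : ℕ} {p : Fin n → ℝ} {Φ : Fin n → Wt (SCSP A)} (hp : ∑ i, p i = 1)
    (hΦ : ∀ i, (dsupp (livePart (Φ i))).Finite) :
    liveExpMin t (fun u => ∑ i, p i * Φ i u) = ∑ i, p i * liveExpMin t (Φ i) := by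
  simp only [liveExpMin, expMin, livePart_sum, dexp_sum_left hΦ, mass_sum hΦ, mul_add,
    Finset.sum_add_distrib]
  congr 1
  rw [Finset.sum_congr rfl fun i _ => show p i * ((1 - mass (livePart (Φ i))) * deadValue t)
    = (p i - p i * mass (livePart (Φ i))) * deadValue t by ring, ← Finset.sum_mul,
    Finset.sum_sub_distrib, hp]

theorem minResult_testPar_le_expMin {Ψ : Wt (SCSP A)} (h : Step q none Ψ) :
    minResult omA (testPar t q) ≤ expMin t Ψ := by
  by_cases hω : ∃ Θ, Step t (some omA) Θ
  · rw [minResult_of_success (testPar_success_iff.mpr hω), ← liveExpMin_eq_expMin h.isUnitMass,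
      liveExpMin_of_success hω (h.isUnitMass.1.subset (dsupp_livePart_subset Ψ))]
  · have := minResult_le_dexp (not_success_testPar (not_exists.mp hω)) (h.testPar_right (t := t))
    rwa [dexp_dmap h.isUnitMass.1] at this

theorem liveExpMin_le_of_tauStep (h : Lift stepTauHat Φ Θ) : liveExpMin t Φ ≤ liveExpMin t Θ := by
  obtain ⟨n, p, x, Ψ, hp₀, hp, rfl, hstep, rfl⟩ := h
  have hΨ (i) : IsUnitMass (Ψ i) :=
    (hstep i).elim Step.isUnitMass fun h => h ▸ (isDist_dirac _).isUnitMass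
  rw [liveExpMin_eq_expMin (IsDist.sum hp₀ hp fun i => isDist_dirac (x i)).isUnitMass,
    liveExpMin_eq_expMin (IsUnitMass.sum hp hΨ), expMin, expMin, dexp_sum_dirac,
    dexp_sum_left fun i => (hΨ i).1]
  refine Finset.sum_le_sum fun i _ => mul_le_mul_of_nonneg_left ?_ (hp₀ i)
  rcases hstep i with h | h
  · exact minResult_testPar_le_expMin h
  · rw [h, dexp_dirac]

theorem liveExpMin_le_of_tauStar (h : TauStar Φ Θ) : liveExpMin t Φ ≤ liveExpMin t Θ := by
  induction h with
  | refl => exact le_rfl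
  | tail _ hstep ih => exact ih.trans (liveExpMin_le_of_tauStep hstep)

end MinimalOutcome

section Soundness

variable {A : Type} {t : SCSP (TAct A)} {Φ : Wt (SCSP A)}

theorem liveExpMin_le_of_lift {Θ Δ : Wt (SCSP A)} {f : SCSP A → ℝ} (hτ : TauStar Φ Θ)
    (hl : Lift fsimLE Δ Θ) (hf : ∀ q ∈ dsupp Δ, ∀ Ψ, fsimLE q Ψ → liveExpMin t Ψ ≤ f q) :
    liveExpMin t Φ ≤ dexp Δ f := by
  obtain ⟨n, p, x, Ψ, hp₀, hp, rfl, hxΨ, rfl⟩ := hl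
  calc liveExpMin t Φ ≤ liveExpMin t (fun u => ∑ i, p i * Ψ i u) := liveExpMin_le_of_tauStar hτ
    _ = ∑ i, p i * liveExpMin t (Ψ i) :=
        liveExpMin_sum hp fun i => (isSubDist_livePart_of_fsimLE (hxΨ i)).2.1
    _ ≤ ∑ i, p i * f (x i) := Finset.sum_le_sum fun i _ => by
        by_cases hi : p i = 0
        · simp [hi]
        · exact mul_le_mul_of_nonneg_left (hf _ (mem_dsupp_sum_dirac hp₀ hi) _ (hxΨ i)) (hp₀ i)
    _ = dexp _ f := (dexp_sum_dirac f).symm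

theorem liveExpMin_le_of_test_step {Θ : Wt (SCSP (TAct A))} (hω : ∀ Θ, ¬ Step t (some omA) Θ)
    (ht : Step t none Θ) (hΦ : IsSubDist (livePart Φ)) :
    liveExpMin t Φ ≤ dexp Θ fun t' => liveExpMin t' Φ := by
  have hmin (u : SCSP A) :
      minResult omA (testPar t u) ≤ dexp Θ fun t' => minResult omA (testPar t' u) := by
    have := minResult_le_dexp (not_success_testPar hω) (ht.testPar_left (q := u) (.inl rfl))
    rwa [dexp_dmap ht.isUnitMass.1] at this
  simp only [liveExpMin, expMin, deadValue]
  rw [dexp_add_right ht.isUnitMass.1, dexp_smul_right, ← dexp_comm hΦ.2.1 ht.isUnitMass.1]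
  exact add_le_add (dexp_mono hΦ.2.1 hΦ.1 fun u _ => hmin u)
    (mul_le_mul_of_nonneg_left (hmin .nil) (sub_nonneg.mpr hΦ.2.2))

theorem liveExpMin_le_of_sync {a : A} {Θ : Wt (SCSP (TAct A))} {Φ₁ Φ₂ : Wt (SCSP A)}
    (hω : ∀ Θ, ¬ Step t (some omA) Θ) (ht : Step t (some (Sum.inl a)) Θ)
    (hτ : TauStar Φ Φ₁) (hs : StepD (some a) Φ₁ Φ₂) :
    liveExpMin t Φ ≤ dexp Θ fun t' => liveExpMin t' Φ₂ := by
  obtain ⟨n, r, u, Ψ, hr₀, hr, rfl, hu, rfl⟩ := hs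
  have hΨ (i) := (hu i).isUnitMass
  have hmin (i) : minResult omA (testPar t (u i)) ≤ dexp Θ fun t' => expMin t' (Ψ i) := by
    have := minResult_le_dexp (not_success_testPar hω) (ht.testPar_sync (hu i))
    rwa [dexp_parDist ht.isUnitMass.1 (hΨ i).1] at this
  calc liveExpMin t Φ ≤ liveExpMin t (fun x => ∑ i, r i * dirac (u i) x) :=
        liveExpMin_le_of_tauStar hτ
    _ = ∑ i, r i * minResult omA (testPar t (u i)) := by
        rw [liveExpMin_eq_expMin (IsDist.sum hr₀ hr fun i => isDist_dirac _).isUnitMass, expMin,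
          dexp_sum_dirac]
    _ ≤ ∑ i, r i * dexp Θ fun t' => expMin t' (Ψ i) :=
        Finset.sum_le_sum fun i _ => mul_le_mul_of_nonneg_left (hmin i) (hr₀ i)
    _ = dexp Θ fun t' => liveExpMin t' (fun x => ∑ i, r i * Ψ i x) := by
        rw [← dexp_sum_right ht.isUnitMass.1]
        refine dexp_congr fun t' _ => ?_
        rw [liveExpMin_eq_expMin (IsUnitMass.sum hr hΨ), expMin, dexp_sum_left fun i => (hΨ i).1]
        rfl

theorem liveExpMin_nonpos_of_deadlocked {q : SCSP A} (hd : Deadlocked (testPar t q))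
    (hsim : fsimLE q Φ) : liveExpMin t Φ ≤ 0 := by
  obtain ⟨ht, hq⟩ := deadlocked_testPar_iff.mp hd
  obtain ⟨Θ, hτ, hr⟩ := hsim.refusal hq
  calc liveExpMin t Φ ≤ liveExpMin t Θ := liveExpMin_le_of_tauStar hτ
    _ = 0 := liveExpMin_eq_zero (fun u hu => deadlocked_testPar_iff.mpr ⟨ht, hr u hu⟩)
        (deadlocked_testPar_iff.mpr ⟨ht, deadlocked_nil.refuses _⟩)

theorem liveExpMin_le_of_vmem {s : SCSP (TAct A)} {r : ℝ} (h : VMem omA s r) :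
    ∀ t q Φ, s = testPar t q → SWF t → fsimLE q Φ → liveExpMin t Φ ≤ r := by
  induction h with
  | succ hs =>
      rintro t q Φ rfl - hsim
      rw [liveExpMin_of_success (testPar_success_iff.mp ⟨_, hs⟩)
        (isSubDist_livePart_of_fsimLE hsim).2.1]
  | stuck hd =>
      rintro t q Φ rfl - hsim
      exact liveExpMin_nonpos_of_deadlocked hd hsim
  | step f hno hs _ ih =>
      rintro t q Φ rfl hwf hsim
      have hω : ∀ Θ, ¬ Step t (some omA) Θ := fun Θ h => hno _ (h.testPar_left (.inr rfl))
      rcases hs.testPar_cases with ⟨Θ, ht, hγ | rfl, rfl⟩ | ⟨Δ, hq, rfl, rfl⟩ |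
        ⟨a, Θ, Δ, rfl, ht, hq, rfl⟩
      · subst hγ
        obtain ⟨hΘ, hΘwf⟩ := ht.isWfDist hwf
        calc liveExpMin t Φ ≤ dexp Θ fun t' => liveExpMin t' Φ :=
              liveExpMin_le_of_test_step hω ht (isSubDist_livePart_of_fsimLE hsim)
          _ ≤ dexp Θ fun t' => f (testPar t' q) := dexp_mono hΘ.2.1 hΘ.1 fun t' ht' =>
              ih _ (mem_dsupp_dmap hΘ ht') t' q Φ rfl (hΘwf t' ht') hsim
          _ = dexp (dmap (testPar · q) Θ) f := (dexp_dmap hΘ.2.1 f).symm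
      · exact absurd ht (hω _)
      · obtain ⟨Θ, hτ, hl⟩ := hsim.step hq
        rw [dexp_dmap hq.isUnitMass.1]
        exact liveExpMin_le_of_lift hτ hl fun q' hq' Ψ hΨ =>
          ih _ (mem_dsupp_dmap hl.isDist_left hq') t q' Ψ rfl hwf hΨ
      · obtain ⟨Θ', ⟨Φ₁, Φ₂, hτ₁, hstep, hτ₂⟩, hl⟩ := hsim.step hq
        obtain ⟨hΘ, hΘwf⟩ := ht.isWfDist hwf
        calc liveExpMin t Φ ≤ dexp Θ fun t' => liveExpMin t' Φ₂ :=
              liveExpMin_le_of_sync hω ht hτ₁ hstep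
          _ ≤ dexp Θ fun t' => dexp Δ fun q' => f (testPar t' q') :=
              dexp_mono hΘ.2.1 hΘ.1 fun t' ht' => liveExpMin_le_of_lift hτ₂ hl fun q' hq' Ψ hΨ =>
                ih _ (mem_dsupp_parDist hΘ hl.isDist_left ht' hq') t' q' Ψ rfl (hΘwf t' ht') hΨ
          _ = dexp (parDist Θ Δ) f := (dexp_parDist hΘ.2.1 hq.isUnitMass.1 f).symm

end Soundness

section TestApplication

variable {C : Type}

theorem dirac_mul_eq_dmap {X Y : Type} (x : X) (Δ : Wt Y) :
    (fun q : X × Y => dirac x q.1 * Δ q.2) = dmap (Prod.mk x) Δ := by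
  funext ⟨x', y⟩
  by_cases h : x' = x
  · subst h
    simp [dirac, dmap_apply_of_injective (Prod.mk_right_injective x')]
  · have : (x', y) ∉ dsupp (dmap (Prod.mk x) Δ) := fun hm => by
      obtain ⟨_, _, he⟩ := dsupp_dmap_subset hm
      exact h (congrArg Prod.fst he).symm
    simpa [dirac, h, mem_dsupp, eq_comm] using this

theorem interp_parCS (B : Set C) (s : SCSP C) :
    ∀ Q : PCSP C, (parCS B s Q).interp = dmap (SCSP.par B s) Q.interp
  | .st v => (dmap_dirac v).symm
  | .pch p Q₁ Q₂ => by
      show (fun u => p * (parCS B s Q₁).interp u + (1 - p) * (parCS B s Q₂).interp u)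
        = dmap _ fun u => p * Q₁.interp u + (1 - p) * Q₂.interp u
      rw [interp_parCS B s Q₁, interp_parCS B s Q₂,
        dmap_add Q₁.isUnitMass_interp.1 Q₂.isUnitMass_interp.1]

theorem interp_parC (B : Set C) : ∀ T Q : PCSP C, (parC B T Q).interp
    = dmap (fun pr : SCSP C × SCSP C => SCSP.par B pr.1 pr.2)
        (fun pr => T.interp pr.1 * Q.interp pr.2)
  | .st s, Q => by
      show (parCS B s Q).interp
        = dmap _ fun pr : SCSP C × SCSP C => dirac s pr.1 * Q.interp pr.2
      rw [interp_parCS, dirac_mul_eq_dmap, dmap_dmap Q.isUnitMass_interp.1]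
  | .pch p T₁ T₂, Q => by
      have h₁ := (T₁.isUnitMass_interp.prod Q.isUnitMass_interp).1
      have h₂ := (T₂.isUnitMass_interp.prod Q.isUnitMass_interp).1
      show (fun u => p * (parC B T₁ Q).interp u + (1 - p) * (parC B T₂ Q).interp u)
        = dmap _ fun pr : SCSP C × SCSP C =>
            (p * T₁.interp pr.1 + (1 - p) * T₂.interp pr.1) * Q.interp pr.2
      simp only [add_mul, mul_assoc]
      rw [dmap_add h₁ h₂, interp_parC B T₁ Q, interp_parC B T₂ Q]

theorem interp_applyTest {A : Type} (T : PCSP (TAct A)) (P : PCSP A) :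
    (applyTest T P).interp = parDist T.interp P.interp := by
  rw [applyTest, interp_parC, interp_mapP]
  rfl

end TestApplication

/-- Theorem 4.8: the failure simulation preorder is sound for must testing. -/
theorem fsim_sound_for_must (A : Type) [Fintype A] (P Q : PCSP A)
    (hP : PWF P) (hQ : PWF Q) : FSimPre P Q → PMust P Q := by
  rintro ⟨Θ, hτ, hl⟩ T hT _ ⟨g, hg, rfl⟩
  obtain ⟨hTd, hTwf⟩ := hT.isWfDist_interp
  have hQd := hQ.isWfDist_interp.1
  rw [interp_applyTest] at hg
  refine ⟨_, ⟨minResult omA, fun u _ => vmem_minResult u, rfl⟩, ?_⟩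
  rw [interp_applyTest, interp_applyTest, dexp_parDist hTd.2.1 P.isUnitMass_interp.1,
    dexp_parDist hTd.2.1 hQd.2.1]
  refine dexp_mono hTd.2.1 hTd.1 fun t ht => ?_
  calc expMin t P.interp = liveExpMin t P.interp :=
        (liveExpMin_eq_expMin P.isUnitMass_interp).symm
    _ ≤ dexp Q.interp fun q => g (testPar t q) :=
        liveExpMin_le_of_lift hτ hl fun q hq Ψ hΨ => liveExpMin_le_of_vmem
          (hg _ (mem_dsupp_parDist hTd hQd ht hq)) t q Ψ rfl (hTwf t ht) hΨ

end PaperPCSP
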